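/- arXiv:math/0609591 — 7 statements merged into one kernel-verified Lean document; each statement's English description precedes it below -/
import Mathlib

section
/- Let m ≥ 1 be an integer and let v : (0,∞) → S² be locally absolutely continuous with finite energy, i.e. π∫₀^∞(|v'(r)|² + (m²/r²)(v₁(r)²+v₂(r)²)) r dr < ∞, and boundary values v(0+) = −k̂ and v(r) → k̂ as r → ∞. Then π∫₀^∞(|v'(r)|² + (m²/r²)(v₁(r)²+v₂(r)²)) r dr = π∫₀^∞ |v'(r) − (m/r) v(r)×Rv(r)|² r dr + 4πm. -/
open MeasureTheory Set Real Filter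
open scoped ENNReal

noncomputable section

abbrev V3 := Fin 3 → ℝ
abbrev V2 := Fin 2 → ℝ

/-- cross product in ℝ³ -/
def cross3 (a b : V3) : V3 :=
  ![a 1 * b 2 - a 2 * b 1, a 2 * b 0 - a 0 * b 2, a 0 * b 1 - a 1 * b 0]

/-- dot product in ℝ³ -/
def dot3 (a b : V3) : ℝ := a 0 * b 0 + a 1 * b 1 + a 2 * b 2

/-- squared euclidean norm in ℝ³ -/
def nsq3 (a : V3) : ℝ := a 0 ^ 2 + a 1 ^ 2 + a 2 ^ 2

/-- the generator R of rotations about the x₃-axis -/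
def Rv (a : V3) : V3 := ![-a 1, a 0, 0]

/-- the rotation e^{αR} about the x₃-axis -/
def rotZ (α : ℝ) (a : V3) : V3 :=
  ![Real.cos α * a 0 - Real.sin α * a 1, Real.sin α * a 0 + Real.cos α * a 1, a 2]

def kHat : V3 := ![0, 0, 1]
def negkHat : V3 := ![0, 0, -1]
def jHat : V3 := ![0, 1, 0]

/-- first component of the harmonic map profile -/
def h1f (m : ℕ) (r : ℝ) : ℝ := 2 / (r ^ (m : ℤ) + r ^ (-(m : ℤ)))

/-- third component of the harmonic map profile -/
def h3f (m : ℕ) (r : ℝ) : ℝ := (r ^ (m : ℤ) - r ^ (-(m : ℤ))) / (r ^ (m : ℤ) + r ^ (-(m : ℤ)))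

/-- the harmonic map profile h -/
def hProf (m : ℕ) (r : ℝ) : V3 := ![h1f m r, 0, h3f m r]

/-- the r-derivative of the harmonic map profile -/
def dhProf (m : ℕ) (r : ℝ) : V3 :=
  ![-((m : ℝ) / r) * h1f m r * h3f m r, 0, ((m : ℝ) / r) * (h1f m r) ^ 2]

/-- profile of the harmonic map e^{(mθ+α)R} h(r/s) -/
def harmP (m : ℕ) (s α : ℝ) (r : ℝ) : V3 := rotZ α (hProf m (r / s))

/-- its r-derivative -/
def dharmP (m : ℕ) (s α : ℝ) (r : ℝ) : V3 := fun i => (1 / s) * rotZ α (dhProf m (r / s)) i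

/-- `v` is locally absolutely continuous on (0,∞), with a.e. derivative `dv`. -/
def LocAC (v dv : ℝ → V3) : Prop :=
  (∀ a b : ℝ, 0 < a → a ≤ b → ∀ i, IntervalIntegrable (fun r => dv r i) volume a b) ∧
  (∀ a b : ℝ, 0 < a → a ≤ b → ∀ i, v b i - v a i = ∫ r in a..b, dv r i)

/-- energy density (w.r.t. dr) of the m-equivariant map with profile (v,dv) -/
def eDen (m : ℕ) (v dv : ℝ → V3) (r : ℝ) : ℝ :=
  (nsq3 (dv r) + ((m : ℝ) ^ 2 / r ^ 2) * ((v r 0) ^ 2 + (v r 1) ^ 2)) * r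

/-- the energy E(u) = (1/2)∫|∇u|² of the m-equivariant map with profile (v,dv) -/
def energy (m : ℕ) (v dv : ℝ → V3) : ℝ := π * ∫ r in Ioi (0:ℝ), eDen m v dv r

/-- membership in the class Σ_m, expressed in terms of the profile (v,dv) -/
def InSigma (m : ℕ) (v dv : ℝ → V3) : Prop :=
  LocAC v dv ∧ (∀ r ∈ Ioi (0:ℝ), nsq3 (v r) = 1) ∧
  IntegrableOn (eDen m v dv) (Ioi (0:ℝ)) ∧
  Tendsto v (nhdsWithin 0 (Ioi 0)) (nhds negkHat) ∧
  Tendsto v atTop (nhds kHat)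

/-- squared Ḣ¹(ℝ²) distance between the m-equivariant maps with profiles (v,dv), (w,dw) -/
def dH1sq (m : ℕ) (v dv w dw : ℝ → V3) : ℝ :=
  2 * π * ∫ r in Ioi (0:ℝ),
    (nsq3 (fun i => dv r i - dw r i)
      + ((m : ℝ) ^ 2 / r ^ 2) * ((v r 0 - w r 0) ^ 2 + (v r 1 - w r 1) ^ 2)) * r

/-- Ḣ¹(ℝ²) distance -/
def dH1 (m : ℕ) (v dv w dw : ℝ → V3) : ℝ := Real.sqrt (dH1sq m v dv w dw)

/-- the polar angle of a point of ℝ² -/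
def angleOf (x : V2) : ℝ := Complex.arg ⟨x 0, x 1⟩

/-- the radius of a point of ℝ² -/
def radOf (x : V2) : ℝ := Real.sqrt ((x 0) ^ 2 + (x 1) ^ 2)

/-- the m-equivariant map u(r,θ) = e^{mθR} v(r) -/
def eqMap (m : ℕ) (v : ℝ → V3) (x : V2) : V3 := rotZ ((m : ℝ) * angleOf x) (v (radOf x))

/-- the spatial gradient ∂_j u of the m-equivariant map with profile (v,dv) -/
def eqGrad (m : ℕ) (v dv : ℝ → V3) (x : V2) (j : Fin 2) : V3 :=
  rotZ ((m : ℝ) * angleOf x) (fun i =>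
    (x j / radOf x) * dv (radOf x) i
      + ((m : ℝ) * (if j = 0 then -(x 1) else x 0) / radOf x ^ 2) * Rv (v (radOf x)) i)

/-- weak (distributional) form of the Schrödinger map equation ∂ₜu = u × Δu on the time
interval I, for the m-equivariant map with time-dependent profile (v,dv):
∫∫ { u·φ_t - Σ_j (u × ∂_j u)·∂_j φ } dx dt = 0 for all C¹ compactly supported φ. -/
def WeakSM (m : ℕ) (I : Set ℝ) (v dv : ℝ → ℝ → V3) : Prop :=
  ∀ φ : ℝ → V2 → V3,
    (∀ i, ContDiff ℝ 1 (fun q : ℝ × V2 => φ q.1 q.2 i)) →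
    (∀ i, HasCompactSupport (fun q : ℝ × V2 => φ q.1 q.2 i)) →
    (∀ t, t ∉ interior I → ∀ x, φ t x = 0) →
    (∫ t in I, ∫ x : V2,
      (dot3 (eqMap m (v t) x) (fun i => deriv (fun τ => φ τ x i) t)
        - ∑ j : Fin 2, dot3 (cross3 (eqMap m (v t) x) (eqGrad m (v t) (dv t) x j))
            (fun i => fderiv ℝ (fun y => φ t y i) x (Pi.single j 1)))) = 0

/-- continuity in t of the map t ↦ u(t) with respect to the Ḣ¹ distance, on I -/
def H1Cont (m : ℕ) (I : Set ℝ) (v dv : ℝ → ℝ → V3) : Prop :=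
  ∀ t₀ ∈ I, ∀ ε > (0:ℝ), ∃ η > (0:ℝ), ∀ t ∈ I, |t - t₀| < η →
    dH1 m (v t) (dv t) (v t₀) (dv t₀) < ε

/-- a weak solution of the Schrödinger map equation in the class C(I; Σ_m), with
initial profile v₀ -/
def SolClass (m : ℕ) (I : Set ℝ) (v dv : ℝ → ℝ → V3) (v₀ : ℝ → V3) : Prop :=
  (∀ r ∈ Ioi (0:ℝ), v 0 r = v₀ r) ∧ WeakSM m I v dv ∧
  (∀ t ∈ I, InSigma m (v t) (dv t)) ∧ H1Cont m I v dv

/-- the profile of Δu for the m-equivariant map u with profile (v,dv,ddv):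
Δu = e^{mθR}( v_rr + v_r/r + (m²/r²) R² v ) -/
def lapP (m : ℕ) (v dv ddv : ℝ → V3) (r : ℝ) : V3 := fun i =>
  ddv r i + dv r i / r + ((m : ℝ) ^ 2 / r ^ 2) * (![-(v r 0), -(v r 1), 0] : V3) i

/-- squared Ḣ² distance (via the Laplacian) -/
def dH2sq (m : ℕ) (v dv ddv w dw ddw : ℝ → V3) : ℝ :=
  2 * π * ∫ r in Ioi (0:ℝ), nsq3 (fun i => lapP m v dv ddv r i - lapP m w dw ddw r i) * r

/-! On the sphere `v · v' = 0`, and completing the square gives, pointwise,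
`(|v'|² + (m²/r²)(v₁² + v₂²)) r = |v' − (m/r) v × Rv|² r + 2m v₃'`.
Applying this with `±m` shows that `|2m v₃'|` is dominated by the energy density, so `m v₃'`
is integrable on `(0,∞)` and `∫₀^∞ m v₃' dr = m (v₃(∞) − v₃(0+)) = 2m`. -/

open Topology

lemma ae_restrict_Ioi_zero_of_forall_Ioo {P : ℝ → Prop}
    (h : ∀ a b : ℝ, 0 < a → ∀ᵐ x, x ∈ Ioo a b → P x) :
    ∀ᵐ x ∂volume.restrict (Ioi 0), P x := by
  have hall : ∀ᵐ x, ∀ n : ℕ, x ∈ Ioo ((n + 1 : ℝ)⁻¹) (n + 1) → P x :=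
    ae_all_iff.2 fun n => h _ _ (by positivity)
  rw [ae_restrict_iff' measurableSet_Ioi]
  filter_upwards [hall] with x hx (hx0 : 0 < x)
  obtain ⟨n, hn⟩ := exists_nat_gt (max x x⁻¹)
  rw [max_lt_iff] at hn
  refine hx n ⟨?_, by linarith⟩
  rw [inv_lt_comm₀ (by positivity) hx0]
  linarith

lemma ae_hasDerivAt_of_sub_eq_integral {f f' : ℝ → ℝ}
    (hf'_int : ∀ a b, 0 < a → a ≤ b → IntervalIntegrable f' volume a b)
    (hf : ∀ a b, 0 < a → a ≤ b → f b - f a = ∫ r in a..b, f' r) :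
    ∀ᵐ x ∂volume.restrict (Ioi 0), HasDerivAt f (f' x) x := by
  refine ae_restrict_Ioi_zero_of_forall_Ioo fun a b ha => ?_
  rcases le_or_gt b a with hba | hab
  · exact ae_of_all _ fun x hx => absurd (hx.1.trans hx.2) hba.not_gt
  filter_upwards [(hf'_int a b ha hab.le).ae_hasDerivAt_integral] with x hx hxab
  have hxIcc : x ∈ uIcc a b := by rw [uIcc_of_le hab.le]; exact Ioo_subset_Icc_self hxab
  refine ((hx hxIcc a left_mem_uIcc).const_add (f a)).congr_of_eventuallyEq ?_
  filter_upwards [isOpen_Ioo.mem_nhds hxab] with y hy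
  rw [← hf a y ha hy.1.le]
  ring

lemma LocAC.ae_hasDerivAt {v dv : ℝ → V3} (h : LocAC v dv) :
    ∀ᵐ x ∂volume.restrict (Ioi 0), ∀ i, HasDerivAt (fun s => v s i) (dv x i) x :=
  ae_all_iff.2 fun i =>
    ae_hasDerivAt_of_sub_eq_integral (h.1 · · · · i) (h.2 · · · · i)

lemma LocAC.aestronglyMeasurable {v dv : ℝ → V3} (h : LocAC v dv) (i : Fin 3) :
    AEStronglyMeasurable (fun r => dv r i) (volume.restrict (Ioi 0)) :=
  (measurable_deriv fun s => v s i).aestronglyMeasurable.congr <| by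
    filter_upwards [h.ae_hasDerivAt] with r hr using (hr i).deriv

lemma integral_Ioi_zero_eq_sub_of_tendsto {f f' : ℝ → ℝ} {l₀ l₁ : ℝ}
    (hf : ∀ a b, 0 < a → a ≤ b → f b - f a = ∫ r in a..b, f' r)
    (hf' : IntegrableOn f' (Ioi 0))
    (h0 : Tendsto f (𝓝[>] 0) (𝓝 l₀)) (hinf : Tendsto f atTop (𝓝 l₁)) :
    ∫ r in Ioi 0, f' r = l₁ - l₀ := by
  have hfst : Tendsto Prod.fst (𝓝[>] (0 : ℝ) ×ˢ (atTop : Filter ℝ)) (𝓝[>] 0) := tendsto_fst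
  have hsnd : Tendsto Prod.snd (𝓝[>] (0 : ℝ) ×ˢ (atTop : Filter ℝ)) atTop := tendsto_snd
  have hcover := (aecover_Ioi_of_Ioi (μ := volume) (hfst.mono_right nhdsWithin_le_nhds)).inter
    (aecover_Iic (μ := volume.restrict (Ioi 0)) hsnd)
  refine hcover.integral_eq_of_tendsto _ hf' ((hinf.comp hsnd).sub (h0.comp hfst) |>.congr' ?_)
  have hpos : ∀ᶠ p : ℝ × ℝ in 𝓝[>] 0 ×ˢ atTop, 0 < p.1 ∧ p.1 ≤ p.2 := by
    filter_upwards [hfst.eventually self_mem_nhdsWithin,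
      hfst.eventually (Ioo_mem_nhdsGT one_pos), hsnd.eventually (eventually_ge_atTop 1)]
      with p hp0 hp1 hp2
    exact ⟨hp0, hp1.2.le.trans hp2⟩
  filter_upwards [hpos] with p ⟨hp0, hp⟩
  rw [Function.comp_apply, Function.comp_apply, hf _ _ hp0 hp, intervalIntegral.integral_of_le hp,
    Measure.restrict_restrict (measurableSet_Ioi.inter measurableSet_Iic), Ioi_inter_Iic,
    inter_eq_left.2 (Ioc_subset_Ioi_self.trans (Ioi_subset_Ioi hp0.le))]

lemma LocAC.integral_const_mul_deriv_eq_of_tendsto {v dv : ℝ → V3} (hAC : LocAC v dv) (c : ℝ)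
    (i : Fin 3) {a b : V3} (hint : IntegrableOn (fun r => c * dv r i) (Ioi 0))
    (h0 : Tendsto v (𝓝[>] 0) (𝓝 a)) (hinf : Tendsto v atTop (𝓝 b)) :
    ∫ r in Ioi 0, c * dv r i = c * (b i - a i) := by
  rcases eq_or_ne c 0 with rfl | hc
  · simp
  have hdv : IntegrableOn (fun r => dv r i) (Ioi 0) := (integrable_const_mul_iff hc.isUnit _).1 hint
  rw [integral_const_mul, integral_Ioi_zero_eq_sub_of_tendsto (hAC.2 · · · · i) hdv
    (((continuous_apply i).tendsto a).comp h0) (((continuous_apply i).tendsto b).comp hinf)]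

lemma dot3_eq_zero_of_nsq3_eq_one {v dv : ℝ → V3} {s : Set ℝ} {x : ℝ} (hs : s ∈ 𝓝 x)
    (hsph : ∀ r ∈ s, nsq3 (v r) = 1) (hder : ∀ i, HasDerivAt (fun r => v r i) (dv x i) x) :
    dot3 (v x) (dv x) = 0 := by
  have hnsq : HasDerivAt (fun r => nsq3 (v r)) (2 * dot3 (v x) (dv x)) x := by
    refine ((((hder 0).fun_pow 2).fun_add ((hder 1).fun_pow 2)).fun_add
      ((hder 2).fun_pow 2)).congr_deriv ?_
    simp only [dot3]
    ring
  have hconst : HasDerivAt (fun r => nsq3 (v r)) 0 x :=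
    (hasDerivAt_const x 1).congr_of_eventuallyEq (eventually_of_mem hs hsph)
  linarith [hnsq.unique hconst]

lemma energy_density_eq_bogomolny (m : ℝ) {r : ℝ} (hr : r ≠ 0) {x y : V3} (hx : nsq3 x = 1)
    (hxy : dot3 x y = 0) :
    (nsq3 y + m ^ 2 / r ^ 2 * (x 0 ^ 2 + x 1 ^ 2)) * r
      = nsq3 (fun i => y i - m / r * cross3 x (Rv x) i) * r + 2 * m * y 2 := by
  simp only [nsq3, dot3, cross3, Rv, Matrix.cons_val_zero, Matrix.cons_val_one,
    Matrix.cons_val_two, Matrix.head_cons, Matrix.tail_cons] at hx hxy ⊢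
  field_simp
  linear_combination (2 * m * y 2 * r - m ^ 2 * (x 0 ^ 2 + x 1 ^ 2)) * hx
    - 2 * m * x 2 * r * hxy

lemma abs_two_mul_le_energy_density (m : ℝ) {r : ℝ} (hr : 0 < r) {x y : V3} (hx : nsq3 x = 1)
    (hxy : dot3 x y = 0) :
    |2 * m * y 2| ≤ (nsq3 y + m ^ 2 / r ^ 2 * (x 0 ^ 2 + x 1 ^ 2)) * r := by
  have hpos := energy_density_eq_bogomolny m hr.ne' hx hxy
  have hneg := energy_density_eq_bogomolny (-m) hr.ne' hx hxy
  rw [neg_sq] at hneg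
  have hnsq : ∀ z : V3, 0 ≤ nsq3 z * r := fun z => by unfold nsq3; positivity
  rw [abs_le]
  constructor <;> linarith [hnsq (fun i => y i - m / r * cross3 x (Rv x) i),
    hnsq (fun i => y i - -m / r * cross3 x (Rv x) i)]

theorem statement5_general (m : ℕ) (v dv : ℝ → V3)
    (hAC : LocAC v dv)
    (hsph : ∀ r ∈ Ioi (0:ℝ), nsq3 (v r) = 1)
    (hfin : IntegrableOn (eDen m v dv) (Ioi (0:ℝ)))
    (h0 : Tendsto v (nhdsWithin 0 (Ioi 0)) (nhds negkHat))
    (hinf : Tendsto v atTop (nhds kHat)) :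
    energy m v dv
      = π * (∫ r in Ioi (0:ℝ),
          nsq3 (fun i => dv r i - ((m : ℝ) / r) * cross3 (v r) (Rv (v r)) i) * r)
        + 4 * π * m := by
  set F : ℝ → ℝ := fun r => nsq3 (fun i => dv r i - (m : ℝ) / r * cross3 (v r) (Rv (v r)) i) * r
  have hder := hAC.ae_hasDerivAt
  have hgood : ∀ᵐ r ∂volume.restrict (Ioi 0),
      0 < r ∧ nsq3 (v r) = 1 ∧ dot3 (v r) (dv r) = 0 := by
    filter_upwards [hder, ae_restrict_mem measurableSet_Ioi] with r hr (hr0 : 0 < r)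
    exact ⟨hr0, hsph r hr0, dot3_eq_zero_of_nsq3_eq_one (Ioi_mem_nhds hr0) hsph hr⟩
  have hsplit : eDen m v dv =ᵐ[volume.restrict (Ioi 0)] fun r => F r + 2 * m * dv r 2 := by
    filter_upwards [hgood] with r ⟨hr, hx, hxy⟩
    exact energy_density_eq_bogomolny _ hr.ne' hx hxy
  have hint : IntegrableOn (fun r => 2 * (m : ℝ) * dv r 2) (Ioi 0) := by
    refine hfin.mono' ((hAC.aestronglyMeasurable 2).const_mul _) ?_
    filter_upwards [hgood] with r ⟨hr, hx, hxy⟩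
    exact abs_two_mul_le_energy_density _ hr hx hxy
  have hF : IntegrableOn F (Ioi 0) := by
    refine (hfin.sub hint).congr ?_
    filter_upwards [hsplit] with r hr
    simp only [Pi.sub_apply, hr, add_sub_cancel_right]
  rw [energy, integral_congr_ae hsplit, integral_add hF hint,
    hAC.integral_const_mul_deriv_eq_of_tendsto _ 2 hint h0 hinf]
  simp only [kHat, negkHat, Matrix.cons_val_two, Matrix.tail_cons, Matrix.head_cons]
  ring

/-- **Energy identity.** For an m-equivariant finite-energy map with profile v,
v(0+) = -k̂, v(∞) = k̂:
E(u) = π ∫ |v_r - (m/r) v × Rv|² r dr + 4πm. -/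
theorem statement5 (m : ℕ) (hm : 1 ≤ m) (v dv : ℝ → V3)
    (hAC : LocAC v dv)
    (hsph : ∀ r ∈ Ioi (0:ℝ), nsq3 (v r) = 1)
    (hfin : IntegrableOn (eDen m v dv) (Ioi (0:ℝ)))
    (h0 : Tendsto v (nhdsWithin 0 (Ioi 0)) (nhds negkHat))
    (hinf : Tendsto v atTop (nhds kHat)) :
    energy m v dv
      = π * (∫ r in Ioi (0:ℝ),
          nsq3 (fun i => dv r i - ((m : ℝ) / r) * cross3 (v r) (Rv (v r)) i) * r)
        + 4 * π * m :=
  statement5_general m v dv hAC hsph hfin h0 hinf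

end
end

section
/- Let m ≥ 1 be an integer and let v : (0,∞) → S² be locally absolutely continuous with boundary values v(0+) = −k̂ and v(r) → k̂ as r → ∞. Then the energy satisfies the topological lower bound π∫₀^∞(|v'(r)|² + (m²/r²)(v₁(r)²+v₂(r)²)) r dr ≥ 4πm. -/
/-! Since `|v| = 1`, the derivative `v'` is a.e. orthogonal to `v`, so Lagrange's identity gives
`(v₃')² ≤ |v'|² (v₁² + v₂²)`, and AM–GM turns this into the pointwise Bogomol'nyi bound
`2 m v₃' ≤ (|v'|² + (m²/r²)(v₁² + v₂²)) r`. Integrating over `[a, b]` bounds the energy below by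
`2 m (v₃(b) - v₃(a))`, which tends to `4 m` as `a → 0⁺` and `b → ∞`. -/

open MeasureTheory Set Real Filter
open scoped ENNReal

noncomputable section

theorem ofReal_integral_le_lintegral_ofReal {α : Type*} [MeasurableSpace α] (μ : Measure α)
    (f : α → ℝ) : ENNReal.ofReal (∫ x, f x ∂μ) ≤ ∫⁻ x, ENNReal.ofReal (f x) ∂μ := by
  by_cases hf : Integrable f μ
  · rw [integral_eq_lintegral_pos_part_sub_lintegral_neg_part hf]
    exact (ENNReal.ofReal_le_ofReal (sub_le_self _ ENNReal.toReal_nonneg)).trans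
      ENNReal.ofReal_toReal_le
  · simp [integral_undef hf]

theorem ae_hasDerivAt_of_sub_eq_intervalIntegral {F f : ℝ → ℝ} {a b : ℝ}
    (hf : IntervalIntegrable f volume a b)
    (hF : ∀ y ∈ Icc a b, F y - F a = ∫ t in a..y, f t) :
    ∀ᵐ x, x ∈ Ioo a b → HasDerivAt F (f x) x := by
  filter_upwards [hf.ae_hasDerivAt_integral] with x hx hxab
  have hderiv := hx (Icc_subset_uIcc (Ioo_subset_Icc_self hxab)) a left_mem_uIcc
  refine (hderiv.const_add (F a)).congr_of_eventuallyEq ?_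
  filter_upwards [Icc_mem_nhds hxab.1 hxab.2] with y hy
  rw [← hF y hy, add_sub_cancel]

namespace LocAC

variable {v dv : ℝ → V3}

theorem ae_hasDerivAt_s6 (hAC : LocAC v dv) :
    ∀ᵐ x, 0 < x → ∀ i, HasDerivAt (fun s => v s i) (dv x i) x := by
  have hlocal : ∀ᵐ x, ∀ p : ℚ × ℚ, ∀ i, 0 < (p.1 : ℝ) → x ∈ Ioo (p.1 : ℝ) p.2 →
      HasDerivAt (fun s => v s i) (dv x i) x := by
    refine ae_all_iff.2 fun p => ae_all_iff.2 fun i => ?_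
    by_cases hp : 0 < (p.1 : ℝ) ∧ (p.1 : ℝ) ≤ p.2
    · filter_upwards [ae_hasDerivAt_of_sub_eq_intervalIntegral (hAC.1 _ _ hp.1 hp.2 i)
        fun y hy => hAC.2 _ y hp.1 hy.1 i] with x hx _ using hx
    · refine Eventually.of_forall fun x hp₀ hx => absurd ⟨hp₀, ?_⟩ hp
      exact hx.1.le.trans hx.2.le
  filter_upwards [hlocal] with x hx hx₀ i
  obtain ⟨q₁, hq₁⟩ := exists_rat_btwn hx₀
  obtain ⟨q₂, hq₂⟩ := exists_rat_btwn (lt_add_one x)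
  exact hx (q₁, q₂) i hq₁.1 ⟨hq₁.2, hq₂.1⟩

theorem ae_dot3_eq_zero (hAC : LocAC v dv) (hsph : ∀ r ∈ Ioi (0:ℝ), nsq3 (v r) = 1) :
    ∀ᵐ x, 0 < x → dot3 (v x) (dv x) = 0 := by
  filter_upwards [hAC.ae_hasDerivAt_s6] with x hx hx₀
  have hd := hx hx₀
  have hsq := (((hd 0).mul (hd 0)).add ((hd 1).mul (hd 1))).add ((hd 2).mul (hd 2))
  have hconst : (fun s => v s 0 * v s 0 + v s 1 * v s 1 + v s 2 * v s 2) =ᶠ[nhds x]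
      fun _ => 1 := by
    filter_upwards [Ioi_mem_nhds hx₀] with s hs
    rw [← hsph s hs, nsq3]
    ring
  have := hsq.unique ((hasDerivAt_const x (1:ℝ)).congr_of_eventuallyEq hconst)
  rw [dot3]
  linarith

end LocAC

theorem two_mul_le_of_dot3_eq_zero {m r : ℝ} (hr : 0 < r) {a b : V3} (ha : nsq3 a = 1)
    (hab : dot3 a b = 0) :
    2 * m * b 2 ≤ (nsq3 b + m ^ 2 / r ^ 2 * (a 0 ^ 2 + a 1 ^ 2)) * r := by
  -- Lagrange's identity, once `a 2 * b 2 = -(a 0 * b 0 + a 1 * b 1)` and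
  -- `a 2 ^ 2 = 1 - a 0 ^ 2 - a 1 ^ 2` are substituted
  have hlagrange : nsq3 b * (a 0 ^ 2 + a 1 ^ 2) - b 2 ^ 2 = (a 0 * b 1 - a 1 * b 0) ^ 2 := by
    simp only [nsq3, dot3] at ha hab ⊢
    linear_combination b 2 ^ 2 * ha + (a 0 * b 0 + a 1 * b 1 - a 2 * b 2) * hab
  have hcauchy : (m * b 2 * r) ^ 2 ≤ (nsq3 b * r ^ 2) * (m ^ 2 * (a 0 ^ 2 + a 1 ^ 2)) := by
    nlinarith [mul_nonneg (sq_nonneg (m * r)) (sq_nonneg (a 0 * b 1 - a 1 * b 0))]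
  have hB : 0 ≤ nsq3 b := by rw [nsq3]; positivity
  have hamgm : 2 * m * b 2 * r ≤ nsq3 b * r ^ 2 + m ^ 2 * (a 0 ^ 2 + a 1 ^ 2) :=
    le_of_sq_le_sq (by nlinarith [sq_nonneg (nsq3 b * r ^ 2 - m ^ 2 * (a 0 ^ 2 + a 1 ^ 2))])
      (by positivity)
  refine ((le_div_iff₀ hr).2 hamgm).trans_eq ?_
  field_simp

theorem ofReal_le_lintegral_eDen (m : ℕ) {v dv : ℝ → V3} (hAC : LocAC v dv)
    (hsph : ∀ r ∈ Ioi (0:ℝ), nsq3 (v r) = 1) {a b : ℝ} (ha : 0 < a) (hab : a ≤ b) :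
    ENNReal.ofReal (2 * m * (v b 2 - v a 2))
      ≤ ∫⁻ r in Ioi (0:ℝ), ENNReal.ofReal (eDen m v dv r) := by
  have hFTC : 2 * m * (v b 2 - v a 2) = ∫ r in Ioc a b, 2 * m * dv r 2 := by
    rw [← intervalIntegral.integral_of_le hab, intervalIntegral.integral_const_mul,
      hAC.2 a b ha hab 2]
  have hpointwise : ∀ᵐ r ∂volume.restrict (Ioc a b),
      ENNReal.ofReal (2 * m * dv r 2) ≤ ENNReal.ofReal (eDen m v dv r) := by
    filter_upwards [ae_restrict_of_ae (hAC.ae_dot3_eq_zero hsph),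
      ae_restrict_mem measurableSet_Ioc] with r horth hr
    have hr₀ : 0 < r := ha.trans hr.1
    exact ENNReal.ofReal_le_ofReal (two_mul_le_of_dot3_eq_zero hr₀ (hsph r hr₀) (horth hr₀))
  calc ENNReal.ofReal (2 * m * (v b 2 - v a 2))
      ≤ ∫⁻ r in Ioc a b, ENNReal.ofReal (2 * m * dv r 2) := by
        rw [hFTC]; exact ofReal_integral_le_lintegral_ofReal _ _
    _ ≤ ∫⁻ r in Ioc a b, ENNReal.ofReal (eDen m v dv r) := lintegral_mono_ae hpointwise
    _ ≤ ∫⁻ r in Ioi (0:ℝ), ENNReal.ofReal (eDen m v dv r) :=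
        lintegral_mono_set fun r hr => ha.trans hr.1

theorem statement6_general (m : ℕ) (v dv : ℝ → V3)
    (hAC : LocAC v dv)
    (hsph : ∀ r ∈ Ioi (0:ℝ), nsq3 (v r) = 1)
    (h0 : Tendsto v (nhdsWithin 0 (Ioi 0)) (nhds negkHat))
    (hinf : Tendsto v atTop (nhds kHat)) :
    ENNReal.ofReal (4 * π * m)
      ≤ ENNReal.ofReal π * ∫⁻ r in Ioi (0:ℝ), ENNReal.ofReal (eDen m v dv r) := by
  have hlim : Tendsto (fun p : ℝ × ℝ => ENNReal.ofReal (2 * m * (v p.2 2 - v p.1 2)))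
      (nhdsWithin 0 (Ioi 0) ×ˢ atTop) (nhds (ENNReal.ofReal (2 * m * (1 - -1)))) := by
    have hend (w : V3) : Tendsto (fun u : V3 => u 2) (nhds w) (nhds (w 2)) :=
      (continuous_apply 2).tendsto w
    have hdiff := (((hend kHat).comp hinf).comp tendsto_snd).sub
      (((hend negkHat).comp h0).comp tendsto_fst)
    simp only [kHat, negkHat] at hdiff
    exact (ENNReal.continuous_ofReal.tendsto _).comp (hdiff.const_mul _)
  have hbound : ∀ᶠ p : ℝ × ℝ in nhdsWithin 0 (Ioi 0) ×ˢ atTop,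
      ENNReal.ofReal (2 * m * (v p.2 2 - v p.1 2))
        ≤ ∫⁻ r in Ioi (0:ℝ), ENNReal.ofReal (eDen m v dv r) := by
    filter_upwards [Eventually.prod_mk (la := nhdsWithin 0 (Ioi 0)) (Ioo_mem_nhdsGT one_pos)
      (eventually_ge_atTop 1)] with p ⟨hp₁, hp₂⟩
    exact ofReal_le_lintegral_eDen m hAC hsph hp₁.1 (hp₁.2.le.trans hp₂)
  calc ENNReal.ofReal (4 * π * m) = ENNReal.ofReal π * ENNReal.ofReal (2 * m * (1 - -1)) := by
        rw [← ENNReal.ofReal_mul pi_pos.le]; ring_nf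
    _ ≤ _ := by gcongr; exact le_of_tendsto hlim hbound

/-- **Topological lower bound on the energy.** For an m-equivariant map with
profile v, v(0+) = -k̂, v(∞) = k̂:
π ∫ (|v_r|² + (m²/r²)(v₁² + v₂²)) r dr ≥ 4πm
(the energy is taken in ℝ≥0∞, so the bound also covers infinite energy). -/
theorem statement6 (m : ℕ) (hm : 1 ≤ m) (v dv : ℝ → V3)
    (hAC : LocAC v dv)
    (hsph : ∀ r ∈ Ioi (0:ℝ), nsq3 (v r) = 1)
    (h0 : Tendsto v (nhdsWithin 0 (Ioi 0)) (nhds negkHat))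
    (hinf : Tendsto v atTop (nhds kHat)) :
    ENNReal.ofReal (4 * π * m)
      ≤ ENNReal.ofReal π * ∫⁻ r in Ioi (0:ℝ), ENNReal.ofReal (eDen m v dv r) :=
  statement6_general m v dv hAC hsph h0 hinf

end
end

section
/- Let m ≥ 1 be an integer and let v : (0,∞) → S² be locally absolutely continuous with finite energy π∫₀^∞(|v'|² + (m²/r²)(v₁²+v₂²)) r dr < ∞, boundary values v(0+) = −k̂ and v(r) → k̂ as r → ∞, and suppose v satisfies the first-order harmonic map equation v'(r) = (m/r) v(r)×Rv(r) for almost every r > 0 (equivalently, v saturates the energy lower bound 4πm). Then there exist s > 0 and α ∈ ℝ such that v(r) = e^{αR} h(r/s) for all r > 0. -/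
open MeasureTheory Set Real Filter
open scoped ENNReal

noncomputable section

/-!
On `r ≥ a > 0` the right-hand side of the first-order equation `v' = (m/r) v × Rv` is Lipschitz
in `v` on the unit ball, uniformly in `r`, so a solution with values in the ball is determined by
its value at `r = 1`. Absolute continuity together with the equation a.e. makes `v` such a classical
solution, since the right-hand side is continuous along `v`. Every `e^{αR} h(·/s)` is a solution,
and its values at `r = 1` exhaust the sphere except the poles `±k̂`. A pole is an equilibrium, so a
solution through one is constant, which the boundary values `v(0+) = -k̂`, `v(∞) = k̂` forbid.
-/

open Metric

lemma cross3_Rv_self (y : V3) :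
    cross3 y (Rv y) = ![-(y 0 * y 2), -(y 1 * y 2), y 0 ^ 2 + y 1 ^ 2] := by
  ext i
  fin_cases i <;>
    simp only [cross3, Rv, Fin.zero_eta, Fin.mk_one, Fin.reduceFinMk, Matrix.cons_val,
      Matrix.cons_val_zero, Matrix.cons_val_one] <;> ring

lemma cross3_Rv_self_eq_zero {y : V3} (h0 : y 0 = 0) (h1 : y 1 = 0) : cross3 y (Rv y) = 0 := by
  ext i; fin_cases i <;> simp [cross3_Rv_self, h0, h1]

lemma contDiff_cross3_Rv_self : ContDiff ℝ 1 (fun y : V3 => cross3 y (Rv y)) := by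
  refine contDiff_pi.2 fun i => ?_
  fin_cases i <;>
    simp only [cross3_Rv_self, Fin.zero_eta, Fin.mk_one, Fin.reduceFinMk, Matrix.cons_val,
      Matrix.cons_val_zero, Matrix.cons_val_one] <;> fun_prop

lemma exists_lipschitzOnWith_cross3_Rv_self :
    ∃ K, LipschitzOnWith K (fun y : V3 => cross3 y (Rv y)) (closedBall 0 1) :=
  contDiff_cross3_Rv_self.locallyLipschitz.locallyLipschitzOn.exists_lipschitzOnWith_of_compact
    (isCompact_closedBall 0 1)

-- The right-hand side of the first-order harmonic map equation `v' = (m/r) v × Rv`.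
def hmField (m : ℕ) (r : ℝ) (y : V3) : V3 := ((m : ℝ) / r) • cross3 y (Rv y)

lemma hmField_eq_zero (m : ℕ) (r : ℝ) {y : V3} (h0 : y 0 = 0) (h1 : y 1 = 0) :
    hmField m r y = 0 := by
  rw [hmField, cross3_Rv_self_eq_zero h0 h1, smul_zero]

lemma exists_lipschitzOnWith_hmField (m : ℕ) {a : ℝ} (ha : 0 < a) :
    ∃ K, ∀ r ≥ a, LipschitzOnWith K (hmField m r) (closedBall 0 1) := by
  obtain ⟨K, hK⟩ := exists_lipschitzOnWith_cross3_Rv_self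
  refine ⟨(m / a).toNNReal * K, fun r hr => ?_⟩
  refine ((lipschitzWith_smul ((m : ℝ) / r)).comp_lipschitzOnWith hK).weaken ?_
  have hr0 : 0 < r := ha.trans_le hr
  gcongr
  rw [← NNReal.coe_le_coe, coe_nnnorm, Real.norm_of_nonneg (by positivity), Real.coe_toNNReal _
    (by positivity)]
  gcongr

lemma eqOn_of_hasDerivAt_hmField {m : ℕ} {v w : ℝ → V3} {t₀ : ℝ} (ht₀ : 0 < t₀)
    (hv : ∀ t > 0, HasDerivAt v (hmField m t (v t)) t)
    (hw : ∀ t > 0, HasDerivAt w (hmField m t (w t)) t)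
    (hvb : ∀ t > 0, v t ∈ closedBall 0 1) (hwb : ∀ t > 0, w t ∈ closedBall 0 1)
    (h : v t₀ = w t₀) : EqOn v w (Ioi 0) := by
  intro r (hr : 0 < r)
  have ha : 0 < min r t₀ / 2 := by positivity
  have hpos : ∀ t ∈ Ioo (min r t₀ / 2) (max r t₀ + 1), 0 < t := fun t ht => ha.trans ht.1
  obtain ⟨K, hK⟩ := exists_lipschitzOnWith_hmField m ha
  refine ODE_solution_unique_of_mem_Ioo (fun t ht => hK t ht.1.le) (t₀ := t₀) ?_
    (fun t ht => ⟨hv t (hpos t ht), hvb t (hpos t ht)⟩)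
    (fun t ht => ⟨hw t (hpos t ht), hwb t (hpos t ht)⟩) h ?_
  · constructor <;> [linarith [min_le_right r t₀]; linarith [le_max_right r t₀]]
  · constructor <;> [linarith [min_le_left r t₀]; linarith [le_max_left r t₀]]

namespace LocAC

variable {v dv : ℝ → V3}

lemma continuousAt (h : LocAC v dv) {t : ℝ} (ht : 0 < t) : ContinuousAt v t := by
  refine continuousAt_pi.2 fun i => ?_
  have hab : t / 2 ≤ t + 1 := by linarith
  have hprim : ContinuousOn (fun u => v (t / 2) i + ∫ r in (t / 2)..u, dv r i)
      (Icc (t / 2) (t + 1)) := by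
    rw [← uIcc_of_le hab]
    exact continuousOn_const.add (intervalIntegral.continuousOn_primitive_interval'
      (h.1 _ _ (half_pos ht) hab i) left_mem_uIcc)
  refine (hprim.congr fun u hu => ?_).continuousAt (Icc_mem_nhds (by linarith) (by linarith))
  linarith [h.2 _ _ (half_pos ht) hu.1 i]

lemma hasDerivAt (h : LocAC v dv) {f : ℝ → V3} (hf : ContinuousOn f (Ioi 0))
    (hae : dv =ᵐ[volume.restrict (Ioi 0)] f) {t : ℝ} (ht : 0 < t) : HasDerivAt v (f t) t := by
  refine hasDerivAt_pi.2 fun i => ?_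
  have hfi : ContinuousOn (fun r => f r i) (Ioi 0) := (continuous_apply i).comp_continuousOn hf
  have hsub : uIcc (t / 2) t ⊆ Ioi 0 := by
    rw [uIcc_of_le (half_le_self ht.le), Icc_subset_Ioi_iff (half_le_self ht.le)]
    exact half_pos ht
  have hprim : HasDerivAt (fun u => ∫ r in (t / 2)..u, f r i) (f t i) t :=
    intervalIntegral.integral_hasDerivAt_right (hfi.mono hsub).intervalIntegrable
      (hfi.stronglyMeasurableAtFilter isOpen_Ioi t ht) (hfi.continuousAt (Ioi_mem_nhds ht))
  refine (hprim.const_add (v (t / 2) i)).congr_of_eventuallyEq ?_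
  filter_upwards [Ioi_mem_nhds (half_lt_self ht)] with u (hu : t / 2 < u)
  have hdv : ∫ r in (t / 2)..u, dv r i = ∫ r in (t / 2)..u, f r i := by
    refine intervalIntegral.integral_congr_ae ?_
    filter_upwards [(ae_restrict_iff' measurableSet_Ioi).1 hae] with r hr hru
    rw [uIoc_of_le hu.le] at hru
    rw [hr ((half_pos ht).trans hru.1)]
  linarith [h.2 _ _ (half_pos ht) hu.le i]

end LocAC

lemma continuousOn_hmField (m : ℕ) {v : ℝ → V3} (hv : ContinuousOn v (Ioi 0)) :
    ContinuousOn (fun r => hmField m r (v r)) (Ioi 0) :=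
  (continuousOn_const.div continuousOn_id fun _ hr => ne_of_gt hr).smul
    (contDiff_cross3_Rv_self.continuous.comp_continuousOn hv)

lemma mem_closedBall_of_nsq3_eq_one {y : V3} (hy : nsq3 y = 1) : y ∈ closedBall (0 : V3) 1 := by
  rw [mem_closedBall_zero_iff, pi_norm_le_iff_of_nonneg zero_le_one]
  intro i
  rw [Real.norm_eq_abs, ← sq_le_one_iff_abs_le_one]
  unfold nsq3 at hy
  fin_cases i <;> simp only [Fin.zero_eta, Fin.mk_one, Fin.reduceFinMk] <;>
    nlinarith [sq_nonneg (y 0), sq_nonneg (y 1), sq_nonneg (y 2)]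

section Profile

variable (m : ℕ) {x : ℝ}

lemma h1f_sq_add_h3f_sq (hx : 0 < x) : h1f m x ^ 2 + h3f m x ^ 2 = 1 := by
  have : 0 < x ^ (m : ℤ) := zpow_pos hx _
  rw [h1f, h3f, zpow_neg]
  field_simp
  ring

lemma h1f_pos (hx : 0 < x) : 0 < h1f m x := by
  have := zpow_pos hx (m : ℤ); have := zpow_pos hx (-(m : ℤ))
  unfold h1f; positivity

lemma hasDerivAt_h1f (hx : 0 < x) :
    HasDerivAt (h1f m) (-(m / x) * h1f m x * h3f m x) x := by
  have := zpow_pos hx (m : ℤ)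
  have hden := (hasDerivAt_zpow (m : ℤ) x (.inl hx.ne')).add
    (hasDerivAt_zpow (-(m : ℤ)) x (.inl hx.ne'))
  refine ((hasDerivAt_const x (2 : ℝ)).div hden
    (add_pos (zpow_pos hx _) (zpow_pos hx _)).ne').congr_deriv ?_
  simp only [Pi.add_apply]
  rw [h1f, h3f, zpow_sub_one₀ hx.ne', zpow_sub_one₀ hx.ne', zpow_neg]
  push_cast
  field_simp
  ring

lemma hasDerivAt_h3f (hx : 0 < x) : HasDerivAt (h3f m) (m / x * h1f m x ^ 2) x := by
  have := zpow_pos hx (m : ℤ)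
  have hnum := (hasDerivAt_zpow (m : ℤ) x (.inl hx.ne')).sub
    (hasDerivAt_zpow (-(m : ℤ)) x (.inl hx.ne'))
  have hden := (hasDerivAt_zpow (m : ℤ) x (.inl hx.ne')).add
    (hasDerivAt_zpow (-(m : ℤ)) x (.inl hx.ne'))
  refine (hnum.div hden (add_pos (zpow_pos hx _) (zpow_pos hx _)).ne').congr_deriv ?_
  simp only [Pi.add_apply, Pi.sub_apply]
  rw [h1f, zpow_sub_one₀ hx.ne', zpow_sub_one₀ hx.ne', zpow_neg]
  push_cast
  field_simp
  ring

end Profile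

section HarmonicProfile

variable (m : ℕ) (α : ℝ) {s r : ℝ}

@[simp] lemma harmP_apply_zero : harmP m s α r 0 = cos α * h1f m (r / s) := by
  simp [harmP, rotZ, hProf]

@[simp] lemma harmP_apply_one : harmP m s α r 1 = sin α * h1f m (r / s) := by
  simp [harmP, rotZ, hProf]

@[simp] lemma harmP_apply_two : harmP m s α r 2 = h3f m (r / s) := by
  simp [harmP, rotZ, hProf]

lemma nsq3_harmP (hr : 0 < r / s) : nsq3 (harmP m s α r) = 1 := by
  rw [nsq3, harmP_apply_zero, harmP_apply_one, harmP_apply_two]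
  linear_combination h1f m (r / s) ^ 2 * cos_sq_add_sin_sq α + h1f_sq_add_h3f_sq m hr

lemma hasDerivAt_harmP (hs : 0 < s) (hr : 0 < r) :
    HasDerivAt (harmP m s α) (hmField m r (harmP m s α r)) r := by
  have hx : 0 < r / s := div_pos hr hs
  have hdiv := (hasDerivAt_id r).div_const s
  have H1 := (hasDerivAt_h1f m hx).comp r hdiv
  have H3 := (hasDerivAt_h3f m hx).comp r hdiv
  refine hasDerivAt_pi.2 fun i => ?_
  fin_cases i <;>
    simp only [Fin.zero_eta, Fin.mk_one, Fin.reduceFinMk, harmP_apply_zero, harmP_apply_one,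
      harmP_apply_two, hmField, cross3_Rv_self, Pi.smul_apply, smul_eq_mul, Matrix.cons_val,
      Matrix.cons_val_zero, Matrix.cons_val_one]
  · exact (H1.const_mul (cos α)).congr_deriv (by field_simp)
  · exact (H1.const_mul (sin α)).congr_deriv (by field_simp)
  · refine H3.congr_deriv ?_
    field_simp
    linear_combination -(m : ℝ) * h1f m (r / s) ^ 2 * cos_sq_add_sin_sq α

end HarmonicProfile

lemma exists_h3f_eq {m : ℕ} (hm : m ≠ 0) {t : ℝ} (ht : |t| < 1) : ∃ x, 0 < x ∧ h3f m x = t := by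
  obtain ⟨ht₁, ht₂⟩ := abs_lt.1 ht
  -- `h3f m x = (u² - 1) / (u² + 1)` with `u = x ^ m`, so take `u² = (1 + t) / (1 - t)`
  set u := √((1 + t) / (1 - t))
  have hu : 0 < u := Real.sqrt_pos.2 (div_pos (by linarith) (by linarith))
  have hu2 : u ^ 2 = (1 + t) / (1 - t) := Real.sq_sqrt (div_pos (by linarith) (by linarith)).le
  refine ⟨u ^ ((m : ℝ)⁻¹), by positivity, ?_⟩
  rw [h3f, zpow_neg, zpow_natCast, Real.rpow_inv_natCast_pow hu.le hm]
  have h1t : 1 - t ≠ 0 := by linarith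
  field_simp
  rw [hu2]
  field_simp
  ring

lemma exists_harmP_one_eq {m : ℕ} (hm : m ≠ 0) {y : V3} (hy : nsq3 y = 1)
    (hpole : ¬(y 0 = 0 ∧ y 1 = 0)) : ∃ s : ℝ, 0 < s ∧ ∃ α, harmP m s α 1 = y := by
  set z : ℂ := ⟨y 0, y 1⟩
  have hz : 0 < ‖z‖ := norm_pos_iff.2 fun h => hpole ⟨congrArg Complex.re h, congrArg Complex.im h⟩
  have hnz : ‖z‖ ^ 2 = y 0 ^ 2 + y 1 ^ 2 := by rw [Complex.sq_norm, Complex.normSq_mk]; ring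
  unfold nsq3 at hy
  obtain ⟨x, hx, hx3⟩ := exists_h3f_eq hm (t := y 2)
    (by rw [← sq_lt_one_iff_abs_lt_one]; nlinarith [pow_pos hz 2])
  have hx1 : h1f m x = ‖z‖ := by
    rw [← sq_eq_sq₀ (h1f_pos m hx).le hz.le]
    linear_combination h1f_sq_add_h3f_sq m hx - hy - hnz - (h3f m x + y 2) * hx3
  refine ⟨x⁻¹, inv_pos.2 hx, Complex.arg z, ?_⟩
  ext i; fin_cases i
  · simp [hx1, mul_comm, Complex.norm_mul_cos_arg, z]
  · simp [hx1, mul_comm, Complex.norm_mul_sin_arg, z]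
  · simp [hx3]

lemma eqOn_const_of_hasDerivAt_hmField {m : ℕ} {v : ℝ → V3} {t₀ : ℝ} (ht₀ : 0 < t₀)
    (hv : ∀ t > 0, HasDerivAt v (hmField m t (v t)) t) (hvb : ∀ t > 0, v t ∈ closedBall 0 1)
    (h₀ : v t₀ 0 = 0) (h₁ : v t₀ 1 = 0) : EqOn v (fun _ => v t₀) (Ioi 0) :=
  eqOn_of_hasDerivAt_hmField ht₀ hv
    (fun t _ => by simpa only [hmField_eq_zero m t h₀ h₁] using hasDerivAt_const t (v t₀))
    hvb (fun _ _ => hvb t₀ ht₀) rfl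

theorem statement7_general (m : ℕ) (hm : 1 ≤ m) (v dv : ℝ → V3)
    (hAC : LocAC v dv)
    (hsph : ∀ r ∈ Ioi (0:ℝ), nsq3 (v r) = 1)
    (h0 : Tendsto v (nhdsWithin 0 (Ioi 0)) (nhds negkHat))
    (hinf : Tendsto v atTop (nhds kHat))
    (heq : ∀ᵐ r ∂(volume.restrict (Ioi (0:ℝ))),
      ∀ i, dv r i = ((m : ℝ) / r) * cross3 (v r) (Rv (v r)) i) :
    ∃ s : ℝ, 0 < s ∧ ∃ α : ℝ, ∀ r ∈ Ioi (0:ℝ), v r = rotZ α (hProf m (r / s)) := by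
  have hode : ∀ t > 0, HasDerivAt v (hmField m t (v t)) t := fun t ht =>
    hAC.hasDerivAt (continuousOn_hmField m fun _ hr => (hAC.continuousAt hr).continuousWithinAt)
      (heq.mono fun _ hr => funext hr) ht
  have hball : ∀ t > 0, v t ∈ closedBall 0 1 := fun t ht =>
    mem_closedBall_of_nsq3_eq_one (hsph t ht)
  have hpole : ¬(v 1 0 = 0 ∧ v 1 1 = 0) := by
    rintro ⟨h₀, h₁⟩
    have hconst := eqOn_const_of_hasDerivAt_hmField one_pos hode hball h₀ h₁
    have hlim₀ : Tendsto v (nhdsWithin 0 (Ioi 0)) (nhds (v 1)) :=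
      tendsto_const_nhds.congr' (eventuallyEq_nhdsWithin_of_eqOn hconst).symm
    have hlimInf : Tendsto v atTop (nhds (v 1)) :=
      tendsto_const_nhds.congr' ((eventually_gt_atTop 0).mono fun t ht => (hconst ht).symm)
    have : (-1 : ℝ) = 1 :=
      congrFun ((tendsto_nhds_unique h0 hlim₀).trans (tendsto_nhds_unique hinf hlimInf).symm) 2
    norm_num at this
  obtain ⟨s, hs, α, hα⟩ :=
    exists_harmP_one_eq (Nat.one_le_iff_ne_zero.1 hm) (hsph 1 (mem_Ioi.2 one_pos)) hpole
  exact ⟨s, hs, α, eqOn_of_hasDerivAt_hmField one_pos hode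
    (fun t ht => hasDerivAt_harmP m α hs ht) hball
    (fun t ht => mem_closedBall_of_nsq3_eq_one (nsq3_harmP m α (div_pos ht hs))) hα.symm⟩

/-- **Rigidity: classification of the energy minimizers.** If a finite-energy
m-equivariant profile v with v(0+) = -k̂, v(∞) = k̂ satisfies the first-order
harmonic map equation v_r = (m/r) v × Rv a.e., then v(r) = e^{αR} h(r/s) for
some s > 0, α ∈ ℝ. -/
theorem statement7 (m : ℕ) (hm : 1 ≤ m) (v dv : ℝ → V3)
    (hAC : LocAC v dv)
    (hsph : ∀ r ∈ Ioi (0:ℝ), nsq3 (v r) = 1)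
    (hfin : IntegrableOn (eDen m v dv) (Ioi (0:ℝ)))
    (h0 : Tendsto v (nhdsWithin 0 (Ioi 0)) (nhds negkHat))
    (hinf : Tendsto v atTop (nhds kHat))
    (heq : ∀ᵐ r ∂(volume.restrict (Ioi (0:ℝ))),
      ∀ i, dv r i = ((m : ℝ) / r) * cross3 (v r) (Rv (v r)) i) :
    ∃ s : ℝ, 0 < s ∧ ∃ α : ℝ, ∀ r ∈ Ioi (0:ℝ), v r = rotZ α (hProf m (r / s)) :=
  statement7_general m hm v dv hAC hsph h0 hinf heq
end
end

section
/- There is a universal constant C such that every locally absolutely continuous function z : (0,∞) → ℂ with ‖z‖_X < ∞ is (after modification on a null set) continuous on (0,∞), has limits z(ρ) → 0 as ρ → 0+ and as ρ → ∞, and satisfies sup_{ρ>0} |z(ρ)| ≤ C‖z‖_X. -/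
open MeasureTheory Set Real Filter
open scoped ENNReal

noncomputable section

/-- `z` is locally absolutely continuous on (0,∞), with a.e. derivative `dz`. -/
def LocACC (z dz : ℝ → ℂ) : Prop :=
  (∀ a b : ℝ, 0 < a → a ≤ b → IntervalIntegrable dz volume a b) ∧
  (∀ a b : ℝ, 0 < a → a ≤ b → z b - z a = ∫ ρ in a..b, dz ρ)

/-- the density (w.r.t. dρ) of the squared X-norm: (|z'|² + |z|²/ρ²) ρ -/
def xDen (z dz : ℝ → ℂ) (ρ : ℝ) : ℝ := (‖dz ρ‖ ^ 2 + ‖z ρ‖ ^ 2 / ρ ^ 2) * ρ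

/-- the X-norm ‖z‖_X = (∫ (|z'|² + |z|²/ρ²) ρ dρ)^{1/2} -/
def normX (z dz : ℝ → ℂ) : ℝ := Real.sqrt (∫ ρ in Ioi (0:ℝ), xDen z dz ρ)

/-- the operator L₀ = ∂_ρ + (m/ρ) h₃(ρ) -/
def L0op (m : ℕ) (z dz : ℝ → ℂ) (ρ : ℝ) : ℂ :=
  dz ρ + ((((m : ℝ) / ρ) * h3f m ρ : ℝ) : ℂ) * z ρ

/-!
Averaging `z ρ = z a - ∫_ρ^a z'` over `a ∈ [ρ, 2ρ]` and splitting `|z a| + ρ |z' a|` by AM–GM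
with a free weight `u` gives `|z ρ| ≤ u T(ρ) + 3 / (4u)`, where `T(ρ)` is the part of `‖z‖_X²`
carried by `[ρ, 2ρ]`; optimising in `u` yields `|z ρ|² ≤ 3 T(ρ)`. Since the X-density is
integrable, `T(ρ) ≤ ‖z‖_X²` and `T(ρ) → 0` both as `ρ → 0⁺` and as `ρ → ∞`.
-/

open Topology

section IntegralOverDyadicInterval

variable {E : Type*} [NormedAddCommGroup E] [NormedSpace ℝ E] {f : ℝ → E}

lemma intervalIntegral_two_mul_eq_sub_primitive (hf : IntegrableOn f (Ioi 0)) {ρ : ℝ}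
    (hρ : 0 < ρ) :
    ∫ a in ρ..2 * ρ, f a =
      (∫ a in 0..2 * ρ, (Ioi 0).indicator f a) - ∫ a in 0..ρ, (Ioi 0).indicator f a := by
  have hg : Integrable ((Ioi 0).indicator f) := (integrable_indicator_iff measurableSet_Ioi).2 hf
  rw [intervalIntegral.integral_interval_sub_left hg.intervalIntegrable hg.intervalIntegrable]
  refine intervalIntegral.integral_congr fun a ha => ?_
  rw [uIcc_of_le (by linarith)] at ha
  exact (indicator_of_mem (hρ.trans_le ha.1) f).symm

lemma tendsto_intervalIntegral_two_mul_nhdsGT_zero (hf : IntegrableOn f (Ioi 0)) :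
    Tendsto (fun ρ => ∫ a in ρ..2 * ρ, f a) (𝓝[>] 0) (𝓝 0) := by
  have hg : Integrable ((Ioi 0).indicator f) := (integrable_indicator_iff measurableSet_Ioi).2 hf
  have hG := intervalIntegral.continuous_primitive (fun _ _ => hg.intervalIntegrable) 0
  have hcont : Continuous fun ρ : ℝ =>
      (∫ a in 0..2 * ρ, (Ioi 0).indicator f a) - ∫ a in 0..ρ, (Ioi 0).indicator f a :=
    (hG.comp (continuous_const.mul continuous_id)).sub hG
  have hlim := (hcont.tendsto 0).mono_left (nhdsWithin_le_nhds (s := Ioi 0))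
  simp only [mul_zero, intervalIntegral.integral_same, sub_self] at hlim
  refine hlim.congr' ?_
  filter_upwards [self_mem_nhdsWithin] with ρ hρ
  exact (intervalIntegral_two_mul_eq_sub_primitive hf hρ).symm

lemma tendsto_intervalIntegral_two_mul_atTop (hf : IntegrableOn f (Ioi 0)) :
    Tendsto (fun ρ => ∫ a in ρ..2 * ρ, f a) atTop (𝓝 0) := by
  have hg : IntegrableOn ((Ioi 0).indicator f) (Ioi 0) :=
    ((integrable_indicator_iff measurableSet_Ioi).2 hf).integrableOn
  have hlim := (intervalIntegral_tendsto_integral_Ioi 0 hg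
    (tendsto_id.const_mul_atTop two_pos)).sub
      (intervalIntegral_tendsto_integral_Ioi 0 hg tendsto_id)
  rw [sub_self] at hlim
  refine hlim.congr' ?_
  filter_upwards [eventually_gt_atTop 0] with ρ hρ
  exact (intervalIntegral_two_mul_eq_sub_primitive hf hρ).symm

end IntegralOverDyadicInterval

lemma le_sqrt_of_forall_le_mul_add_div {x T c : ℝ} (hc : 0 < c)
    (h : ∀ u > 0, x ≤ u * T + c / u) : x ≤ √(4 * c * T) := by
  rcases le_or_gt x 0 with hx | hx
  · exact hx.trans (Real.sqrt_nonneg _)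
  refine Real.le_sqrt_of_sq_le ?_
  -- `u = 2c / x` rather than the optimal `u = √(c / T)`, which would need `T ≠ 0`
  have hu := h (2 * c / x) (by positivity)
  rw [div_div_eq_mul_div] at hu
  have : x * x ≤ 2 * c * T + x * x / 2 := by
    have := mul_le_mul_of_nonneg_left hu hx.le
    field_simp at this ⊢
    linarith
  nlinarith

lemma xDen_nonneg (z dz : ℝ → ℂ) {ρ : ℝ} (hρ : 0 ≤ ρ) : 0 ≤ xDen z dz ρ := by
  unfold xDen; positivity

lemma norm_add_mul_norm_le_xDen (z dz : ℝ → ℂ) {ρ a u : ℝ} (hρ : 0 < ρ) (ha : ρ ≤ a)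
    (ha' : a ≤ 2 * ρ) (hu : 0 < u) :
    ‖z a‖ + ρ * ‖dz a‖ ≤ u * ρ * xDen z dz a + 3 / (4 * u) := by
  have ha0 : 0 < a := hρ.trans_le ha
  have h1 : ‖z a‖ ≤ u * ρ * ‖z a‖ ^ 2 / a + 1 / (2 * u) := by
    have e : u * ρ * ‖z a‖ ^ 2 / a + 1 / (2 * u) =
        (2 * u ^ 2 * ρ * ‖z a‖ ^ 2 + a) / (2 * u * a) := by
      field_simp
    rw [e, le_div_iff₀ (by positivity)]
    nlinarith [sq_nonneg (2 * u * ρ * ‖z a‖ - a), norm_nonneg (z a)]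
  have h2 : ρ * ‖dz a‖ ≤ u * ρ * ‖dz a‖ ^ 2 * a + 1 / (4 * u) := by
    have e : u * ρ * ‖dz a‖ ^ 2 * a + 1 / (4 * u) =
        (4 * u ^ 2 * ρ * ‖dz a‖ ^ 2 * a + 1) / (4 * u) := by
      field_simp
    rw [e, le_div_iff₀ (by positivity)]
    nlinarith [sq_nonneg (2 * u * ρ * ‖dz a‖ - 1),
      mul_le_mul_of_nonneg_left ha (by positivity : 0 ≤ u ^ 2 * ρ * ‖dz a‖ ^ 2)]
  have : u * ρ * xDen z dz a + 3 / (4 * u) =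
      u * ρ * ‖z a‖ ^ 2 / a + 1 / (2 * u) + (u * ρ * ‖dz a‖ ^ 2 * a + 1 / (4 * u)) := by
    unfold xDen; field_simp; ring
  linarith

namespace LocACC

variable {z dz : ℝ → ℂ}

lemma continuousOn (hz : LocACC z dz) : ContinuousOn z (Ioi 0) := by
  intro ρ hρ
  have hρ' : 0 < ρ / 2 := half_pos hρ
  have hle : ρ / 2 ≤ 2 * ρ := by linarith [mem_Ioi.1 hρ]
  have hprim :
      ContinuousOn (fun x => z (ρ / 2) + ∫ t in ρ / 2..x, dz t) (Icc (ρ / 2) (2 * ρ)) := by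
    have := intervalIntegral.continuousOn_primitive_interval' (hz.1 _ _ hρ' hle) left_mem_uIcc
    rw [uIcc_of_le hle] at this
    exact continuousOn_const.add this
  have heq : EqOn z (fun x => z (ρ / 2) + ∫ t in ρ / 2..x, dz t) (Icc (ρ / 2) (2 * ρ)) :=
    fun x hx => by simp only [← hz.2 _ _ hρ' hx.1, add_sub_cancel]
  refine ((hprim.congr heq).continuousAt (Icc_mem_nhds ?_ ?_)).continuousWithinAt <;>
    linarith [mem_Ioi.1 hρ]

lemma intervalIntegrable_norm (hz : LocACC z dz) {a b : ℝ} (ha : 0 < a) (hab : a ≤ b) :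
    IntervalIntegrable (fun t => ‖z t‖) volume a b :=
  ((hz.continuousOn.mono fun _ ht => ha.trans_le ht.1).norm.mono
    (uIcc_of_le hab).subset).intervalIntegrable

lemma norm_le_add_integral_norm (hz : LocACC z dz) {ρ a b : ℝ} (hρ : 0 < ρ) (ha : ρ ≤ a)
    (hab : a ≤ b) : ‖z ρ‖ ≤ ‖z a‖ + ∫ t in ρ..b, ‖dz t‖ := by
  have hdz := (hz.1 ρ b hρ (ha.trans hab)).norm
  calc ‖z ρ‖ ≤ ‖z a‖ + ‖z a - z ρ‖ := by
        simpa [norm_sub_rev] using norm_le_norm_add_norm_sub' (z ρ) (z a)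
    _ ≤ ‖z a‖ + ∫ t in ρ..a, ‖dz t‖ := by
        rw [hz.2 ρ a hρ ha]
        gcongr
        exact intervalIntegral.norm_integral_le_integral_norm ha
    _ ≤ ‖z a‖ + ∫ t in ρ..b, ‖dz t‖ := by
        gcongr
        exact intervalIntegral.integral_mono_interval le_rfl ha hab
          (Eventually.of_forall fun _ => norm_nonneg _) hdz

lemma mul_norm_le_integral (hz : LocACC z dz) {ρ : ℝ} (hρ : 0 < ρ) :
    ρ * ‖z ρ‖ ≤ ∫ a in ρ..2 * ρ, (‖z a‖ + ρ * ‖dz a‖) := by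
  have hle : ρ ≤ 2 * ρ := by linarith
  have hzi := hz.intervalIntegrable_norm hρ hle
  have hdzi := (hz.1 ρ (2 * ρ) hρ hle).norm
  set K := ∫ t in ρ..2 * ρ, ‖dz t‖
  calc ρ * ‖z ρ‖ = ∫ _ in ρ..2 * ρ, ‖z ρ‖ := by
        rw [intervalIntegral.integral_const, smul_eq_mul]; ring
    _ ≤ ∫ a in ρ..2 * ρ, (‖z a‖ + K) :=
        intervalIntegral.integral_mono_on hle intervalIntegrable_const
          (hzi.add intervalIntegrable_const)
          fun a ha => hz.norm_le_add_integral_norm hρ ha.1 ha.2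
    _ = ∫ a in ρ..2 * ρ, (‖z a‖ + ρ * ‖dz a‖) := by
        rw [intervalIntegral.integral_add hzi intervalIntegrable_const,
          intervalIntegral.integral_add hzi (hdzi.const_mul ρ), intervalIntegral.integral_const,
          intervalIntegral.integral_const_mul]
        ring

lemma norm_le_mul_add_div (hz : LocACC z dz) (hX : IntegrableOn (xDen z dz) (Ioi 0)) {ρ u : ℝ}
    (hρ : 0 < ρ) (hu : 0 < u) : ‖z ρ‖ ≤ u * (∫ a in ρ..2 * ρ, xDen z dz a) + 3 / 4 / u := by
  have hle : ρ ≤ 2 * ρ := by linarith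
  have hXi : IntervalIntegrable (xDen z dz) volume ρ (2 * ρ) :=
    (intervalIntegrable_iff_integrableOn_Ioc_of_le hle).2
      (hX.mono_set fun _ ht => hρ.trans ht.1)
  refine le_of_mul_le_mul_left ?_ hρ
  calc ρ * ‖z ρ‖ ≤ ∫ a in ρ..2 * ρ, (‖z a‖ + ρ * ‖dz a‖) := hz.mul_norm_le_integral hρ
    _ ≤ ∫ a in ρ..2 * ρ, (u * ρ * xDen z dz a + 3 / (4 * u)) :=
        intervalIntegral.integral_mono_on hle
          ((hz.intervalIntegrable_norm hρ hle).add ((hz.1 ρ _ hρ hle).norm.const_mul ρ))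
          ((hXi.const_mul _).add intervalIntegrable_const)
          fun a ha => norm_add_mul_norm_le_xDen z dz hρ ha.1 ha.2 hu
    _ = ρ * (u * (∫ a in ρ..2 * ρ, xDen z dz a) + 3 / 4 / u) := by
        rw [intervalIntegral.integral_add (hXi.const_mul _) intervalIntegrable_const,
          intervalIntegral.integral_const_mul, intervalIntegral.integral_const, smul_eq_mul]
        ring

lemma norm_le_sqrt_three_mul (hz : LocACC z dz) (hX : IntegrableOn (xDen z dz) (Ioi 0)) {ρ : ℝ}
    (hρ : 0 < ρ) : ‖z ρ‖ ≤ √3 * √(∫ a in ρ..2 * ρ, xDen z dz a) := by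
  have := le_sqrt_of_forall_le_mul_add_div (by norm_num : (0 : ℝ) < 3 / 4)
    fun u hu => hz.norm_le_mul_add_div hX hρ hu
  rwa [show (4 : ℝ) * (3 / 4) = 3 by norm_num, Real.sqrt_mul (by norm_num)] at this

lemma tendsto_zero_of_tendsto_intervalIntegral (hz : LocACC z dz)
    (hX : IntegrableOn (xDen z dz) (Ioi 0)) {l : Filter ℝ} (hl : ∀ᶠ ρ in l, 0 < ρ)
    (hT : Tendsto (fun ρ => ∫ a in ρ..2 * ρ, xDen z dz a) l (𝓝 0)) :
    Tendsto z l (𝓝 0) :=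
  squeeze_zero_norm' (hl.mono fun _ hρ => hz.norm_le_sqrt_three_mul hX hρ)
    (by simpa using hT.sqrt.const_mul √3)

end LocACC

/-- **X-norm embedding.** There is a universal constant C such that every locally
absolutely continuous z : (0,∞) → ℂ with ‖z‖_X < ∞ is continuous on (0,∞),
tends to 0 as ρ → 0+ and ρ → ∞, and satisfies sup |z| ≤ C ‖z‖_X. -/
theorem statement8 :
    ∃ C > (0:ℝ), ∀ z dz : ℝ → ℂ,
      LocACC z dz →
      IntegrableOn (xDen z dz) (Ioi (0:ℝ)) →
      ContinuousOn z (Ioi (0:ℝ)) ∧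
      Tendsto z (nhdsWithin 0 (Ioi 0)) (nhds 0) ∧
      Tendsto z atTop (nhds 0) ∧
      ∀ ρ ∈ Ioi (0:ℝ), ‖z ρ‖ ≤ C * normX z dz := by
  refine ⟨√3, by positivity, fun z dz hz hX => ⟨hz.continuousOn,
    hz.tendsto_zero_of_tendsto_intervalIntegral hX self_mem_nhdsWithin
      (tendsto_intervalIntegral_two_mul_nhdsGT_zero hX),
    hz.tendsto_zero_of_tendsto_intervalIntegral hX (eventually_gt_atTop 0)
      (tendsto_intervalIntegral_two_mul_atTop hX),
    fun ρ hρ => (hz.norm_le_sqrt_three_mul hX hρ).trans ?_⟩⟩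
  have hdyadic : ∫ a in ρ..2 * ρ, xDen z dz a ≤ ∫ a in Ioi 0, xDen z dz a := by
    rw [intervalIntegral.integral_of_le (by linarith [mem_Ioi.1 hρ])]
    exact setIntegral_mono_set hX
      ((ae_restrict_iff' measurableSet_Ioi).2 (.of_forall fun _ ha => xDen_nonneg z dz ha.le))
      (show Ioc ρ (2 * ρ) ⊆ Ioi 0 from fun _ ha => (mem_Ioi.1 hρ).trans ha.1).eventuallyLE
  unfold normX
  gcongr

end
end

section
/- Let m ≥ 1 be an integer, C₀ > 0, and let I ⊂ ℝ be an interval. Let q, ν : (0,∞)×I → ℂ be measurable with |ν(r,t)| ≤ C₀ for all (r,t). Define Q(r,t) := |q(r,t)|² + (2m/r) Re(ν̄(r,t) q(r,t)) and S(r,t) := −(1/2)Q(r,t) + ∫_r^∞ (1/τ) Q(τ,t) dτ. Then there is a constant C depending only on m and C₀ such that ‖S q‖_{L^{4/3}_t L^{4/3}_x} ≤ C ‖q‖_{L⁴_t L⁴_x} ( ‖q‖²_{L⁴_t L⁴_x} + ‖q/r‖_{L²_t L²_x} ), whenever the right-hand side is finite. -/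
open MeasureTheory Set Real Filter
open scoped ENNReal

noncomputable section

/-- Q(r,t) = |q(r,t)|² + (2m/r) Re( conj(ν) q )(r,t) -/
def Qf (m : ℕ) (q ν : ℝ → ℝ → ℂ) (r t : ℝ) : ℝ :=
  ‖q r t‖ ^ 2 + (2 * (m : ℝ) / r) * ((starRingEnd ℂ) (ν r t) * q r t).re

/-- S(r,t) = -(1/2) Q(r,t) + ∫_r^∞ Q(τ,t)/τ dτ -/
def Sf (m : ℕ) (q ν : ℝ → ℝ → ℂ) (r t : ℝ) : ℝ :=
  -(1 / 2) * Qf m q ν r t + ∫ τ in Ioi r, Qf m q ν τ t / τ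

/-- the mixed norm ‖f‖_{L^a_t L^b_x} over (0,∞) × I, with spatial norms the radial
L^b(ℝ²) norms, valued in ℝ≥0∞ -/
def mixNorm (a b : ℝ) (I : Set ℝ) (f : ℝ → ℝ → ℂ) : ℝ≥0∞ :=
  (∫⁻ t in I, (ENNReal.ofReal (2 * π) *
      ∫⁻ r in Ioi (0:ℝ), ENNReal.ofReal (‖f r t‖ ^ b * r)) ^ (a / b)) ^ (1 / a)

/-!
Pointwise, `|S| ≤ |Q| + H*|Q|`, where `H*g(r) = ∫_r^∞ g(τ) dτ/τ` is the dual Hardy operator.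
Cauchy–Schwarz against `τ⁻¹` and Fubini show that `H*` is a contraction of `L²(r dr)`, so
`‖S‖²_{L²_x} ≲ ‖Q‖²_{L²_x} ≲ ‖q‖⁴_{L⁴_x} + ‖q/r‖²_{L²_x}` since `|ν| ≤ C₀`. Hölder's inequality
`‖S q‖_{L^{4/3}_x} ≤ ‖S‖_{L²_x} ‖q‖_{L⁴_x}` in space, then Hölder with exponents `3/2` and `3` in
time, give the estimate.
-/

/-- `r dr` on `(0, ∞)`: the radial part of Lebesgue measure on `ℝ²`, without the factor `2π`. -/
def radialMeasure : Measure ℝ := (volume.restrict (Ioi 0)).withDensity ENNReal.ofReal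

instance : SFinite radialMeasure := by
  unfold radialMeasure
  infer_instance

lemma lintegral_radialMeasure (F : ℝ → ℝ≥0∞) :
    ∫⁻ r, F r ∂radialMeasure = ∫⁻ r in Ioi 0, ENNReal.ofReal r * F r :=
  lintegral_withDensity_eq_lintegral_mul_non_measurable _ ENNReal.measurable_ofReal
    (.of_forall fun _ => ENNReal.ofReal_lt_top) F

lemma ae_radialMeasure_pos : ∀ᵐ r ∂radialMeasure, 0 < r :=
  (withDensity_absolutelyContinuous _ _).ae_le (ae_restrict_mem measurableSet_Ioi)

lemma measurable_lintegral_radialMeasure {f : ℝ → ℝ → ℂ}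
    (hf : Measurable (Function.uncurry f)) (p : ℝ) :
    Measurable fun t => ∫⁻ r, ‖f r t‖ₑ ^ p ∂radialMeasure :=
  ((hf.comp measurable_swap).enorm.pow_const p).lintegral_prod_right'

lemma mixNorm_self_eq (I : Set ℝ) (f : ℝ → ℝ → ℂ) {a : ℝ} (ha : 0 < a) :
    mixNorm a a I f =
      (ENNReal.ofReal (2 * π) * ∫⁻ t in I, ∫⁻ r, ‖f r t‖ₑ ^ a ∂radialMeasure) ^ (1 / a) := by
  simp_rw [mixNorm, div_self ha.ne', ENNReal.rpow_one, lintegral_radialMeasure]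
  rw [lintegral_const_mul' _ _ ENNReal.ofReal_ne_top]
  congr 3 with t
  refine lintegral_congr fun r => ?_
  rw [ENNReal.ofReal_mul (by positivity), mul_comm,
    ← ENNReal.ofReal_rpow_of_nonneg (norm_nonneg _) ha.le, ofReal_norm]

lemma lintegral_mul_rpow_four_thirds_le {α : Type*} [MeasurableSpace α] {μ : Measure α}
    {f g : α → ℝ≥0∞} (hf : AEMeasurable f μ) (hg : AEMeasurable g μ) :
    ∫⁻ a, (f a * g a) ^ (4 / 3 : ℝ) ∂μ
      ≤ (∫⁻ a, f a ^ (2:ℝ) ∂μ) ^ (2 / 3 : ℝ) * (∫⁻ a, g a ^ (4:ℝ) ∂μ) ^ (1 / 3 : ℝ) := by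
  have hsplit (a : α) : (f a * g a) ^ (4 / 3 : ℝ) =
      (f a ^ (2:ℝ)) ^ (2 / 3 : ℝ) * (g a ^ (4:ℝ)) ^ (1 / 3 : ℝ) := by
    rw [ENNReal.mul_rpow_of_nonneg _ _ (by norm_num), ← ENNReal.rpow_mul, ← ENNReal.rpow_mul]
    norm_num
  simp_rw [hsplit]
  exact ENNReal.lintegral_mul_norm_pow_le (hf.pow_const _) (hg.pow_const _) (by norm_num)
    (by norm_num) (by norm_num)

def dualHardy (g : ℝ → ℝ≥0∞) (r : ℝ) : ℝ≥0∞ := ∫⁻ τ in Ioi r, g τ / ENNReal.ofReal τ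

lemma antitone_dualHardy (g : ℝ → ℝ≥0∞) : Antitone (dualHardy g) := fun _ _ hab =>
  lintegral_mono_set (Ioi_subset_Ioi hab)

lemma lintegral_Ioi_inv_rpow_two {r : ℝ} (hr : 0 < r) :
    ∫⁻ τ in Ioi r, (ENNReal.ofReal τ)⁻¹ ^ (2:ℝ) = (ENNReal.ofReal r)⁻¹ := by
  have hofReal : ∀ τ ∈ Ioi r, (ENNReal.ofReal τ)⁻¹ ^ (2:ℝ) = ENNReal.ofReal (τ ^ (-2:ℝ)) := by
    intro τ hτ
    have hτ0 : 0 < τ := hr.trans hτ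
    rw [ENNReal.inv_rpow, ENNReal.ofReal_rpow_of_pos hτ0,
      ← ENNReal.ofReal_inv_of_pos (by positivity), ← Real.rpow_neg hτ0.le]
  rw [setLIntegral_congr_fun measurableSet_Ioi hofReal,
    ← ofReal_integral_eq_lintegral_ofReal (integrableOn_Ioi_rpow_of_lt (by norm_num) hr)
      (ae_restrict_of_forall_mem measurableSet_Ioi fun τ hτ =>
        (Real.rpow_pos_of_pos (hr.trans hτ) _).le),
    integral_Ioi_rpow_of_lt (by norm_num) hr]
  norm_num
  rw [Real.rpow_neg_one, ENNReal.ofReal_inv_of_pos hr]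

lemma ofReal_mul_dualHardy_rpow_two_le {g : ℝ → ℝ≥0∞} (hg : Measurable g) {r : ℝ}
    (hr : 0 < r) :
    ENNReal.ofReal r * dualHardy g r ^ (2:ℝ) ≤ ∫⁻ τ in Ioi r, g τ ^ (2:ℝ) := by
  have hcs := ENNReal.lintegral_mul_le_Lp_mul_Lq (volume.restrict (Ioi r))
    Real.HolderConjugate.two_two hg.aemeasurable
    (g := fun τ => (ENNReal.ofReal τ)⁻¹) ENNReal.measurable_ofReal.inv.aemeasurable
  rw [lintegral_Ioi_inv_rpow_two hr] at hcs
  calc ENNReal.ofReal r * dualHardy g r ^ (2:ℝ)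
      ≤ ENNReal.ofReal r * ((∫⁻ τ in Ioi r, g τ ^ (2:ℝ)) ^ (1 / 2 : ℝ) *
          (ENNReal.ofReal r)⁻¹ ^ (1 / 2 : ℝ)) ^ (2:ℝ) := by
        gcongr
        simpa only [dualHardy, div_eq_mul_inv, Pi.mul_apply] using hcs
    _ = ∫⁻ τ in Ioi r, g τ ^ (2:ℝ) := by
        rw [ENNReal.mul_rpow_of_nonneg _ _ zero_le_two, ← ENNReal.rpow_mul, ← ENNReal.rpow_mul]
        norm_num
        rw [mul_left_comm, ENNReal.mul_inv_cancel (by simpa using hr) ENNReal.ofReal_ne_top,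
          mul_one]

lemma setLIntegral_Ioi_setLIntegral_Ioi {h : ℝ → ℝ≥0∞} (hh : Measurable h) :
    ∫⁻ r in Ioi 0, ∫⁻ τ in Ioi r, h τ = ∫⁻ τ in Ioi 0, ENNReal.ofReal τ * h τ := by
  have hmeas : Measurable fun p : ℝ × ℝ => (Ioi p.1).indicator h p.2 := by
    have : (fun p : ℝ × ℝ => (Ioi p.1).indicator h p.2) =
        {p : ℝ × ℝ | p.1 < p.2}.indicator (fun p => h p.2) := by
      ext p
      simp only [indicator_apply, mem_Ioi, mem_ofPred_eq]
    rw [this]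
    exact (hh.comp measurable_snd).indicator (measurableSet_lt measurable_fst measurable_snd)
  calc ∫⁻ r in Ioi 0, ∫⁻ τ in Ioi r, h τ
      = ∫⁻ r in Ioi 0, ∫⁻ τ in Ioi 0, (Ioi r).indicator h τ := by
        refine setLIntegral_congr_fun measurableSet_Ioi fun r hr => ?_
        rw [lintegral_indicator measurableSet_Ioi, Measure.restrict_restrict measurableSet_Ioi,
          Ioi_inter_Ioi, sup_eq_left.2 (le_of_lt hr)]
    _ = ∫⁻ τ in Ioi 0, ∫⁻ r in Ioi 0, (Iio τ).indicator (fun _ => h τ) r := by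
        rw [lintegral_lintegral_swap hmeas.aemeasurable]
        rfl
    _ = ∫⁻ τ in Ioi 0, ENNReal.ofReal τ * h τ := by
        refine setLIntegral_congr_fun measurableSet_Ioi fun τ _ => ?_
        rw [lintegral_indicator_const measurableSet_Iio, Measure.restrict_apply measurableSet_Iio,
          Iio_inter_Ioi, Real.volume_Ioo, sub_zero, mul_comm]

lemma lintegral_dualHardy_rpow_two_le {g : ℝ → ℝ≥0∞} (hg : Measurable g) :
    ∫⁻ r, dualHardy g r ^ (2:ℝ) ∂radialMeasure ≤ ∫⁻ r, g r ^ (2:ℝ) ∂radialMeasure := by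
  rw [lintegral_radialMeasure, lintegral_radialMeasure,
    ← setLIntegral_Ioi_setLIntegral_Ioi (hg.pow_const _)]
  exact setLIntegral_mono' measurableSet_Ioi fun r hr => ofReal_mul_dualHardy_rpow_two_le hg hr

lemma lintegral_add_dualHardy_rpow_two_le {g : ℝ → ℝ≥0∞} (hg : Measurable g) :
    ∫⁻ r, (g r + dualHardy g r) ^ (2:ℝ) ∂radialMeasure ≤
      4 * ∫⁻ r, g r ^ (2:ℝ) ∂radialMeasure :=
  calc ∫⁻ r, (g r + dualHardy g r) ^ (2:ℝ) ∂radialMeasure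
      ≤ ∫⁻ r, 2 * (g r ^ (2:ℝ) + dualHardy g r ^ (2:ℝ)) ∂radialMeasure := by
        refine lintegral_mono fun r => ?_
        exact (ENNReal.rpow_add_le_mul_rpow_add_rpow _ _ one_le_two).trans_eq (by norm_num)
    _ = 2 * (∫⁻ r, g r ^ (2:ℝ) ∂radialMeasure +
          ∫⁻ r, dualHardy g r ^ (2:ℝ) ∂radialMeasure) := by
        rw [lintegral_const_mul' _ _ (by simp), lintegral_add_left (hg.pow_const _)]
    _ ≤ 4 * ∫⁻ r, g r ^ (2:ℝ) ∂radialMeasure := by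
        grw [lintegral_dualHardy_rpow_two_le hg, ← two_mul, ← mul_assoc]
        norm_num

lemma enorm_nonlocal_le_add_dualHardy (Q : ℝ → ℝ) {r : ℝ} (hr : 0 < r) :
    ‖-(1 / 2) * Q r + ∫ τ in Ioi r, Q τ / τ‖ₑ ≤ ‖Q r‖ₑ + dualHardy (fun τ => ‖Q τ‖ₑ) r := by
  refine (enorm_add_le _ _).trans (add_le_add ?_ ?_)
  · rw [enorm_mul]
    refine mul_le_of_le_one_left' ?_
    rw [Real.enorm_eq_ofReal_abs]
    norm_num
  · refine (enorm_integral_le_lintegral_enorm _).trans_eq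
      (setLIntegral_congr_fun measurableSet_Ioi fun τ hτ => ?_)
    have hτ0 : 0 < τ := hr.trans hτ
    rw [← ofReal_norm, norm_div, Real.norm_of_nonneg hτ0.le, ENNReal.ofReal_div_of_pos hτ0,
      ofReal_norm]

lemma abs_Qf_le (m : ℕ) (q ν : ℝ → ℝ → ℂ) {C₀ r t : ℝ} (hν : ‖ν r t‖ ≤ C₀) (hr : 0 < r) :
    |Qf m q ν r t| ≤ ‖q r t‖ ^ 2 + 2 * m * C₀ * (‖q r t‖ / r) := by
  have hre : |((starRingEnd ℂ) (ν r t) * q r t).re| ≤ C₀ * ‖q r t‖ :=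
    (Complex.abs_re_le_norm _).trans <| by
      rw [norm_mul, Complex.norm_conj]
      gcongr
  calc |Qf m q ν r t|
      ≤ |‖q r t‖ ^ 2| + |2 * m / r| * |((starRingEnd ℂ) (ν r t) * q r t).re| := by
        rw [Qf, ← abs_mul]; exact abs_add_le _ _
    _ ≤ ‖q r t‖ ^ 2 + 2 * m / r * (C₀ * ‖q r t‖) := by
        rw [abs_of_nonneg (by positivity), abs_of_nonneg (by positivity)]
        gcongr
    _ = ‖q r t‖ ^ 2 + 2 * m * C₀ * (‖q r t‖ / r) := by ring

lemma enorm_Qf_rpow_two_le (m : ℕ) (q ν : ℝ → ℝ → ℂ) {C₀ r t : ℝ} (hν : ‖ν r t‖ ≤ C₀)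
    (hr : 0 < r) :
    ‖Qf m q ν r t‖ₑ ^ (2:ℝ) ≤ ENNReal.ofReal (2 * (1 + 4 * (m * C₀) ^ 2)) *
      (‖q r t‖ₑ ^ (4:ℝ) + ‖q r t / r‖ₑ ^ (2:ℝ)) := by
  have hC₀ : 0 ≤ C₀ := (norm_nonneg _).trans hν
  have hreal : ‖Qf m q ν r t‖ ^ 2 ≤
      2 * (1 + 4 * (m * C₀) ^ 2) * (‖q r t‖ ^ 4 + ‖q r t / r‖ ^ 2) := by
    have hQ := abs_Qf_le m q ν hν hr
    rw [Real.norm_eq_abs, norm_div, Complex.norm_real, Real.norm_of_nonneg hr.le]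
    have hx : 0 ≤ ‖q r t‖ / r := by positivity
    -- `(a + b)² ≤ 2a² + 2b²`
    nlinarith [pow_le_pow_left₀ (abs_nonneg _) hQ 2,
      sq_nonneg (‖q r t‖ ^ 2 - 2 * m * C₀ * (‖q r t‖ / r)),
      mul_nonneg (sq_nonneg ((m:ℝ) * C₀)) (sq_nonneg (‖q r t‖ ^ 2))]
  simp only [ENNReal.rpow_ofNat, ← ofReal_norm, ← ENNReal.ofReal_pow (norm_nonneg _)]
  rw [← ENNReal.ofReal_add (by positivity) (by positivity), ← ENNReal.ofReal_mul (by positivity)]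
  exact ENNReal.ofReal_le_ofReal hreal

lemma measurable_Qf (m : ℕ) {q ν : ℝ → ℝ → ℂ} {t : ℝ} (hq : Measurable (q · t))
    (hν : Measurable (ν · t)) :
    Measurable fun r => Qf m q ν r t := by
  unfold Qf
  fun_prop

lemma lintegral_nonlocal_mul_rpow_le {K : ℝ≥0∞} {Q : ℝ → ℝ} {u : ℝ → ℂ}
    (hQ : Measurable Q) (hu : Measurable u)
    (hQu : ∀ r, 0 < r → ‖Q r‖ₑ ^ (2:ℝ) ≤ K * (‖u r‖ₑ ^ (4:ℝ) + ‖u r / r‖ₑ ^ (2:ℝ))) :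
    ∫⁻ r, ‖((-(1 / 2) * Q r + ∫ τ in Ioi r, Q τ / τ : ℝ) : ℂ) * u r‖ₑ ^ (4 / 3 : ℝ)
        ∂radialMeasure
      ≤ (4 * K) ^ (2 / 3 : ℝ) *
        ((∫⁻ r, ‖u r‖ₑ ^ (4:ℝ) ∂radialMeasure + ∫⁻ r, ‖u r / r‖ₑ ^ (2:ℝ) ∂radialMeasure)
          ^ (2 / 3 : ℝ) * (∫⁻ r, ‖u r‖ₑ ^ (4:ℝ) ∂radialMeasure) ^ (1 / 3 : ℝ)) := by
  set g : ℝ → ℝ≥0∞ := fun r => ‖Q r‖ₑ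
  have hg : Measurable g := hQ.enorm
  have hQ2 : ∫⁻ r, g r ^ (2:ℝ) ∂radialMeasure ≤ K *
      (∫⁻ r, ‖u r‖ₑ ^ (4:ℝ) ∂radialMeasure + ∫⁻ r, ‖u r / r‖ₑ ^ (2:ℝ) ∂radialMeasure) := by
    rw [← lintegral_add_left (hu.enorm.pow_const _), ← lintegral_const_mul K
      (by fun_prop : Measurable fun r : ℝ => ‖u r‖ₑ ^ (4:ℝ) + ‖u r / r‖ₑ ^ (2:ℝ))]
    exact lintegral_mono_ae (ae_radialMeasure_pos.mono hQu)
  calc ∫⁻ r, ‖((-(1 / 2) * Q r + ∫ τ in Ioi r, Q τ / τ : ℝ) : ℂ) * u r‖ₑ ^ (4 / 3 : ℝ)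
        ∂radialMeasure
      ≤ ∫⁻ r, ((g r + dualHardy g r) * ‖u r‖ₑ) ^ (4 / 3 : ℝ) ∂radialMeasure := by
        refine lintegral_mono_ae (ae_radialMeasure_pos.mono fun r hr => ?_)
        rw [enorm_mul, enorm_eq_nnnorm, Complex.nnnorm_real, ← enorm_eq_nnnorm]
        gcongr
        exact enorm_nonlocal_le_add_dualHardy Q hr
    _ ≤ (∫⁻ r, (g r + dualHardy g r) ^ (2:ℝ) ∂radialMeasure) ^ (2 / 3 : ℝ) *
          (∫⁻ r, ‖u r‖ₑ ^ (4:ℝ) ∂radialMeasure) ^ (1 / 3 : ℝ) :=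
        lintegral_mul_rpow_four_thirds_le
          (hg.add (antitone_dualHardy g).measurable).aemeasurable hu.enorm.aemeasurable
    _ ≤ _ := by
        grw [lintegral_add_dualHardy_rpow_two_le hg, hQ2, ← mul_assoc,
          ENNReal.mul_rpow_of_nonneg _ _ (by norm_num : (0:ℝ) ≤ 2 / 3), mul_assoc]

lemma lintegral_le_of_le_rpow_mul_rpow {α : Type*} [MeasurableSpace α] {μ : Measure α}
    {c : ℝ≥0∞} (hc : c ≠ ⊤) {L A B : α → ℝ≥0∞} (hA : AEMeasurable A μ) (hB : AEMeasurable B μ)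
    (h : ∀ a, L a ≤ c * ((A a + B a) ^ (2 / 3 : ℝ) * A a ^ (1 / 3 : ℝ))) :
    ∫⁻ a, L a ∂μ ≤
      c * ((∫⁻ a, A a ∂μ + ∫⁻ a, B a ∂μ) ^ (2 / 3 : ℝ) * (∫⁻ a, A a ∂μ) ^ (1 / 3 : ℝ)) := by
  grw [lintegral_mono h, lintegral_const_mul' _ _ hc,
    ENNReal.lintegral_mul_norm_pow_le (f := fun a => A a + B a) (hA.add hB) hA
      (by norm_num) (by norm_num) (by norm_num),
    lintegral_add_left' hA]

lemma mul_rpow_three_fourths_le_of_le {κ c X Y Z : ℝ≥0∞}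
    (hZ : Z ≤ c ^ (2 / 3 : ℝ) * ((X + Y) ^ (2 / 3 : ℝ) * X ^ (1 / 3 : ℝ))) :
    (κ * Z) ^ (3 / 4 : ℝ) ≤ c ^ (1 / 2 : ℝ) * (κ * X) ^ (1 / 4 : ℝ) *
      (((κ * X) ^ (1 / 4 : ℝ)) ^ 2 + (κ * Y) ^ (1 / 2 : ℝ)) := by
  have h34 : (0:ℝ) ≤ 3 / 4 := by norm_num
  calc (κ * Z) ^ (3 / 4 : ℝ)
      ≤ (κ * (c ^ (2 / 3 : ℝ) * ((X + Y) ^ (2 / 3 : ℝ) * X ^ (1 / 3 : ℝ)))) ^ (3 / 4 : ℝ) := by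
        gcongr
    _ = c ^ (1 / 2 : ℝ) * (κ * X) ^ (1 / 4 : ℝ) * (κ * X + κ * Y) ^ (1 / 2 : ℝ) := by
        have hκ : κ ^ (3 / 4 : ℝ) = κ ^ (1 / 4 : ℝ) * κ ^ (1 / 2 : ℝ) := by
          rw [← ENNReal.rpow_add_of_nonneg _ _ (by norm_num) (by norm_num)]
          norm_num
        simp only [← mul_add, ENNReal.mul_rpow_of_nonneg _ _ h34,
          ENNReal.mul_rpow_of_nonneg _ _ (by norm_num : (0:ℝ) ≤ 1 / 4),
          ENNReal.mul_rpow_of_nonneg _ _ (by norm_num : (0:ℝ) ≤ 1 / 2), ← ENNReal.rpow_mul, hκ]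
        norm_num
        ring
    _ ≤ _ := by
        grw [ENNReal.rpow_add_le_add_rpow _ _ (by norm_num) (by norm_num),
          ← ENNReal.rpow_mul_natCast]
        norm_num

theorem statement12_general (m : ℕ) (C₀ : ℝ) :
    ∃ C > (0:ℝ), ∀ (I : Set ℝ), I.OrdConnected →
      ∀ (q ν : ℝ → ℝ → ℂ),
      Measurable (Function.uncurry q) →
      Measurable (Function.uncurry ν) →
      (∀ r t : ℝ, ‖ν r t‖ ≤ C₀) →
      mixNorm (4/3) (4/3) I (fun r t => (Sf m q ν r t : ℂ) * q r t)
        ≤ ENNReal.ofReal C * mixNorm 4 4 I q *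
            ((mixNorm 4 4 I q) ^ (2:ℕ) + mixNorm 2 2 I (fun r t => q r t / (r : ℂ))) := by
  set K : ℝ := 2 * (1 + 4 * (m * C₀) ^ 2)
  refine ⟨√(4 * K), by positivity, fun I _ q ν hq hν hνC => ?_⟩
  have hslice {f : ℝ → ℝ → ℂ} (hf : Measurable (Function.uncurry f)) (t : ℝ) :
      Measurable (f · t) :=
    hf.comp (measurable_id.prodMk measurable_const)
  have hspace (t : ℝ) := lintegral_nonlocal_mul_rpow_le (K := ENNReal.ofReal K)
    (measurable_Qf m (hslice hq t) (hslice hν t)) (hslice hq t)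
    fun r hr => enorm_Qf_rpow_two_le m q ν (hνC r t) hr
  have htime := lintegral_le_of_le_rpow_mul_rpow (μ := volume.restrict I)
    (ENNReal.rpow_ne_top_of_nonneg (by norm_num) (by finiteness))
    (measurable_lintegral_radialMeasure hq 4).aemeasurable
    (measurable_lintegral_radialMeasure (f := fun r t => q r t / r)
      (hq.div (Complex.measurable_ofReal.comp measurable_fst)) 2).aemeasurable hspace
  rw [mixNorm_self_eq _ _ (by norm_num), mixNorm_self_eq _ _ (by norm_num),
    mixNorm_self_eq _ _ (by norm_num), Real.sqrt_eq_rpow,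
    ← ENNReal.ofReal_rpow_of_nonneg (by positivity) (by norm_num),
    ENNReal.ofReal_mul (show (0:ℝ) ≤ 4 by norm_num), ENNReal.ofReal_ofNat,
    show (1:ℝ) / (4 / 3) = 3 / 4 by norm_num]
  exact mul_rpow_three_fourths_le_of_le htime

/-- **Nonlinear estimate for the nonlocal term.**
‖S q‖_{L^{4/3}_t L^{4/3}_x} ≤ C ‖q‖_{L⁴_tL⁴_x} ( ‖q‖²_{L⁴_tL⁴_x} + ‖q/r‖_{L²_tL²_x} ),
with C depending only on m and the bound C₀ for |ν|. -/
theorem statement12 (m : ℕ) (hm : 1 ≤ m) (C₀ : ℝ) (hC₀ : 0 < C₀) :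
    ∃ C > (0:ℝ), ∀ (I : Set ℝ), I.OrdConnected →
      ∀ (q ν : ℝ → ℝ → ℂ),
      Measurable (Function.uncurry q) →
      Measurable (Function.uncurry ν) →
      (∀ r t : ℝ, ‖ν r t‖ ≤ C₀) →
      mixNorm (4/3) (4/3) I (fun r t => (Sf m q ν r t : ℂ) * q r t)
        ≤ ENNReal.ofReal C * mixNorm 4 4 I q *
            ((mixNorm 4 4 I q) ^ (2:ℕ) + mixNorm 2 2 I (fun r t => q r t / (r : ℂ))) :=
  statement12_general m C₀

end
end

section
/- Let m ≥ 1 be an integer and h₃(ρ) = (ρ^m−ρ^{−m})/(ρ^m+ρ^{−m}). Then for all r > 0 and s > 0, |h₃(r/s) − h₃(r)| ≤ m |s − 1| / min(1,s). -/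
/-!
Substituting `ρ = eᵗ` turns `h₃` into `t ↦ tanh (m t)`, and `tanh` is `1`-Lipschitz since
`tanh' = 1 - tanh² ∈ (0, 1]`. Hence `|h₃(r/s) - h₃(r)| ≤ m |log s|`, and the elementary bounds
`1 - 1/s ≤ log s ≤ s - 1` give `|log s| ≤ |s - 1| / min 1 s`.
-/

open MeasureTheory Set Real Filter
open scoped ENNReal

noncomputable section

theorem Real.hasDerivAt_tanh (x : ℝ) : HasDerivAt tanh (1 - tanh x ^ 2) x := by
  have hquot := (hasDerivAt_sinh x).div (hasDerivAt_cosh x) (cosh_pos x).ne'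
  rw [show tanh = sinh / cosh from funext tanh_eq_sinh_div_cosh]
  refine hquot.congr_deriv ?_
  rw [Pi.div_apply, div_pow, one_sub_div (pow_ne_zero 2 (cosh_pos x).ne')]
  ring

theorem Real.lipschitzWith_tanh : LipschitzWith 1 tanh :=
  lipschitzWith_of_nnnorm_deriv_le (fun x => (hasDerivAt_tanh x).differentiableAt) fun x => by
    have htanh_sq : tanh x ^ 2 < 1 := (sq_lt_one_iff_abs_lt_one _).mpr (abs_tanh_lt_one x)
    rw [(hasDerivAt_tanh x).deriv, ← NNReal.coe_le_coe, coe_nnnorm, NNReal.coe_one,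
      Real.norm_eq_abs, abs_of_pos (by linarith)]
    linarith [sq_nonneg (tanh x)]

theorem Real.abs_tanh_sub_tanh_le (a b : ℝ) : |tanh a - tanh b| ≤ |a - b| := by
  simpa [Real.dist_eq] using lipschitzWith_tanh.dist_le_mul a b

theorem Real.abs_log_le_abs_sub_one_div_min {s : ℝ} (hs : 0 < s) :
    |log s| ≤ |s - 1| / min 1 s := by
  rcases le_or_gt 1 s with h1s | hs1
  · rw [min_eq_left h1s, div_one, abs_of_nonneg (log_nonneg h1s), abs_of_nonneg (by linarith)]
    exact log_le_sub_one_of_pos hs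
  · rw [min_eq_right hs1.le, abs_of_nonpos (log_nonpos hs.le hs1.le),
      abs_of_nonpos (by linarith), le_div_iff₀ hs]
    have h := mul_le_mul_of_nonneg_left (one_sub_inv_le_log_of_pos hs) hs.le
    rw [mul_sub, mul_inv_cancel₀ hs.ne', mul_one] at h
    linarith

theorem h3f_eq_tanh (m : ℕ) {x : ℝ} (hx : 0 < x) : h3f m x = tanh (m * log x) := by
  have hpow : ∀ n : ℤ, x ^ n = exp (n * log x) := fun n => by
    rw [← rpow_intCast, rpow_def_of_pos hx, mul_comm]
  rw [h3f, hpow, hpow, tanh_eq_sinh_div_cosh, sinh_eq, cosh_eq]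
  push_cast
  field_simp

theorem statement13_general (m : ℕ) (r s : ℝ) (hr : 0 < r) (hs : 0 < s) :
    |h3f m (r / s) - h3f m r| ≤ (m : ℝ) * |s - 1| / min 1 s := by
  rw [h3f_eq_tanh m (div_pos hr hs), h3f_eq_tanh m hr]
  calc |tanh (m * log (r / s)) - tanh (m * log r)|
      ≤ |m * log (r / s) - m * log r| := abs_tanh_sub_tanh_le _ _
    _ = m * |log s| := by
        rw [log_div hr.ne' hs.ne', ← mul_sub, sub_sub_cancel_left, abs_mul, abs_neg, Nat.abs_cast]
    _ ≤ m * (|s - 1| / min 1 s) := by gcongr; exact abs_log_le_abs_sub_one_div_min hs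
    _ = m * |s - 1| / min 1 s := (mul_div_assoc _ _ _).symm

/-- **Scaling estimate for h₃.** For every integer m ≥ 1 and all r, s > 0,
|h₃(r/s) − h₃(r)| ≤ m |s − 1| / min(1,s). -/
theorem statement13 (m : ℕ) (hm : 1 ≤ m) (r s : ℝ) (hr : 0 < r) (hs : 0 < s) :
    |h3f m (r / s) - h3f m r| ≤ (m : ℝ) * |s - 1| / min 1 s :=
  statement13_general m r s hr hs

end
end

section
/- Let m ≥ 1 be an integer and b ∈ ℝ. For every z ∈ C_c^∞((0,∞);ℂ), ∫₀^∞ |(L₀z)(ρ)|² ρ^{−2b} ρ dρ = ∫₀^∞ |z'(ρ)|² ρ^{−2b} ρ dρ + m ∫₀^∞ (|z(ρ)|²/ρ^{2b+2}) ( m + 2b h₃(ρ) − 2m h₁(ρ)² ) ρ dρ. -/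
open MeasureTheory Set Real Filter
open scoped ENNReal

noncomputable section

lemma aux_h1h3 (m : ℕ) {r : ℝ} (hr : 0 < r) :
    (h1f m r)^2 + (h3f m r)^2 = 1 := by
  have hne : r ≠ 0 := hr.ne'
  have hpos : 0 < r ^ (m:ℤ) + r ^ (-(m:ℤ)) := by positivity
  have hx : r ^ (m:ℤ) * r ^ (-(m:ℤ)) = 1 := by rw [← zpow_add₀ hne]; simp
  unfold h1f h3f
  field_simp
  ring_nf
  linear_combination (-4) * hx

lemma aux_h3deriv (m : ℕ) {r : ℝ} (hr : 0 < r) :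
    HasDerivAt (h3f m) ((m / r) * (h1f m r)^2) r := by
  have hne : r ≠ 0 := hr.ne'
  have h1 : HasDerivAt (fun r : ℝ => r ^ (m:ℤ)) ((m:ℤ) * r ^ ((m:ℤ) - 1)) r :=
    hasDerivAt_zpow _ _ (Or.inl hne)
  have h2 : HasDerivAt (fun r : ℝ => r ^ (-(m:ℤ))) (((-(m:ℤ)):ℝ) * r ^ (-(m:ℤ) - 1)) r := by
    exact_mod_cast hasDerivAt_zpow (-(m:ℤ)) r (Or.inl hne)
  have hpos : 0 < r ^ (m:ℤ) + r ^ (-(m:ℤ)) := by positivity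
  have hd := ((h1.sub h2).div (h1.add h2) hpos.ne')
  have hd' : HasDerivAt (h3f m) _ r := hd
  convert hd' using 1
  have e1 : r ^ ((m:ℤ) - 1) = r ^ (m:ℤ) / r := by rw [zpow_sub_one₀ hne]; ring
  have e2 : r ^ (-(m:ℤ) - 1) = r ^ (-(m:ℤ)) / r := by rw [zpow_sub_one₀ hne]; ring
  rw [e1, e2]
  unfold h1f
  simp only [Pi.add_apply, Pi.sub_apply, zpow_neg]
  field_simp
  ring_nf
  push_cast
  ring

lemma aux_h1cont (m : ℕ) {r : ℝ} (hr : 0 < r) : ContinuousAt (h1f m) r := by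
  have hne : r ≠ 0 := hr.ne'
  have hpos : 0 < r ^ (m:ℤ) + r ^ (-(m:ℤ)) := by positivity
  exact continuousAt_const.div
    (((continuousAt_zpow₀ r (m:ℤ) (Or.inl hne))).add
      ((continuousAt_zpow₀ r (-(m:ℤ)) (Or.inl hne)))) hpos.ne'

lemma aux_normsq_expand (c : ℝ) (u v : ℂ) :
    ‖u + (c:ℂ) * v‖^2 = ‖u‖^2 + 2*c*(inner ℝ v u : ℝ) + c^2 * ‖v‖^2 := by
  have hsm : (c:ℂ) * v = c • v := by simp [Complex.real_smul]
  rw [hsm, norm_add_sq_real, real_inner_smul_right, norm_smul]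
  rw [real_inner_comm]
  simp [mul_pow]
  ring

/-- **Weighted quadratic-form identity for L₀.** For m ≥ 1, b ∈ ℝ and every
z ∈ C_c^∞((0,∞); ℂ):
∫ |L₀z|² ρ^{−2b} ρ dρ = ∫ |z′|² ρ^{−2b} ρ dρ
  + m ∫ (|z|²/ρ^{2b+2}) (m + 2b h₃ − 2m h₁²) ρ dρ. -/
theorem statement19 (m : ℕ) (hm : 1 ≤ m) (b : ℝ) (z : ℝ → ℂ)
    (hsmooth : ContDiff ℝ (⊤ : ℕ∞) z)
    (hsupp : HasCompactSupport z)
    (hsupp' : tsupport z ⊆ Ioi (0:ℝ)) :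
    (∫ ρ in Ioi (0:ℝ), ‖L0op m z (deriv z) ρ‖ ^ 2 * ρ ^ (-(2 * b)) * ρ)
      = (∫ ρ in Ioi (0:ℝ), ‖deriv z ρ‖ ^ 2 * ρ ^ (-(2 * b)) * ρ)
        + (m : ℝ) * ∫ ρ in Ioi (0:ℝ),
            (‖z ρ‖ ^ 2 / ρ ^ (2 * b + 2))
              * ((m : ℝ) + 2 * b * h3f m ρ - 2 * (m : ℝ) * (h1f m ρ) ^ 2) * ρ := by
  classical
  -- basic facts about z
  have hzd : ∀ ρ : ℝ, HasDerivAt z (deriv z ρ) ρ := fun ρ =>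
    (hsmooth.differentiable (by simp) ρ).hasDerivAt
  have hz0 : ∀ ρ, ρ ∉ tsupport z → z ρ = 0 := fun ρ h => image_eq_zero_of_notMem_tsupport h
  have hdz0 : ∀ ρ, ρ ∉ tsupport z → deriv z ρ = 0 := by
    intro ρ h
    have hopen : IsOpen (tsupport z)ᶜ := (isClosed_tsupport z).isOpen_compl
    have hev : z =ᶠ[nhds ρ] (fun _ => 0) := by
      filter_upwards [hopen.mem_nhds h] with x hx using image_eq_zero_of_notMem_tsupport hx
    rw [hev.deriv_eq]; simp
  -- support bounds
  set K : Set ℝ := tsupport z ∪ Icc 1 2 with hK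
  have hKc : IsCompact K := hsupp.union isCompact_Icc
  have hKne : K.Nonempty := ⟨1, Or.inr ⟨le_refl 1, by norm_num⟩⟩
  have hKsub : K ⊆ Ioi 0 := union_subset hsupp' (fun x hx => lt_of_lt_of_le one_pos hx.1)
  have ha : (0:ℝ) < sInf K := hKsub (hKc.sInf_mem hKne)
  set a' : ℝ := sInf K / 2 with ha'def
  set A' : ℝ := sSup K + 1 with hA'def
  have ha' : 0 < a' := by positivity
  have haA : a' ≤ A' := by
    have h1 : sInf K ≤ sSup K := csInf_le_csSup hKne hKc.bddBelow hKc.bddAbove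
    simp only [ha'def, hA'def]; linarith
  have hmemK : ∀ x ∈ K, a' < x ∧ x < A' := by
    intro x hx
    constructor
    · have := csInf_le hKc.bddBelow hx
      simp only [ha'def]; linarith
    · have := le_csSup hKc.bddAbove hx
      simp only [hA'def]; linarith
  have hnotK : ∀ x : ℝ, x ∉ Ioc a' A' → x ∉ tsupport z := by
    intro x hx hmem
    have := hmemK x (Or.inl hmem)
    exact hx ⟨this.1, le_of_lt this.2⟩
  have ha'K : a' ∉ tsupport z := fun h => (lt_irrefl a' (hmemK a' (Or.inl h)).1)
  have hA'K : A' ∉ tsupport z := fun h => (lt_irrefl A' (hmemK A' (Or.inl h)).2)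
  -- the three integrands
  set f1 : ℝ → ℝ := fun ρ => ‖L0op m z (deriv z) ρ‖ ^ 2 * ρ ^ (-(2 * b)) * ρ with hf1def
  set f2 : ℝ → ℝ := fun ρ => ‖deriv z ρ‖ ^ 2 * ρ ^ (-(2 * b)) * ρ with hf2def
  set f3 : ℝ → ℝ := fun ρ => (‖z ρ‖ ^ 2 / ρ ^ (2 * b + 2))
      * ((m : ℝ) + 2 * b * h3f m ρ - 2 * (m : ℝ) * (h1f m ρ) ^ 2) * ρ with hf3def
  -- vanishing off the support
  have hf1z : ∀ ρ, ρ ∉ tsupport z → f1 ρ = 0 := by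
    intro ρ h; simp [hf1def, L0op, hz0 ρ h, hdz0 ρ h]
  have hf2z : ∀ ρ, ρ ∉ tsupport z → f2 ρ = 0 := by
    intro ρ h; simp [hf2def, hdz0 ρ h]
  have hf3z : ∀ ρ, ρ ∉ tsupport z → f3 ρ = 0 := by
    intro ρ h; simp [hf3def, hz0 ρ h]
  -- reduce Ioi integrals to interval integrals
  have hred : ∀ f : ℝ → ℝ, (∀ ρ, ρ ∉ tsupport z → f ρ = 0) →
      (∫ ρ in Ioi (0:ℝ), f ρ) = ∫ ρ in a'..A', f ρ := by
    intro f hf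
    have h1 : (∫ ρ in Ioi (0:ℝ), f ρ) = ∫ ρ, f ρ := by
      apply setIntegral_eq_integral_of_forall_compl_eq_zero
      intro x hx
      exact hf x (fun hmem => hx (hsupp' hmem))
    have h2 : (∫ ρ in Ioc a' A', f ρ) = ∫ ρ, f ρ := by
      apply setIntegral_eq_integral_of_forall_compl_eq_zero
      intro x hx
      exact hf x (hnotK x hx)
    rw [h1, ← h2, intervalIntegral.integral_of_le haA]
  -- continuity facts
  have hzc : Continuous z := hsmooth.continuous
  have hdzc : Continuous (deriv z) := hsmooth.continuous_deriv (by simp)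
  have hrpC : ∀ (p : ℝ) (ρ : ℝ), ρ ∈ Ioi (0:ℝ) → ContinuousAt (fun x : ℝ => x ^ p) ρ :=
    fun p ρ hρ => Real.continuousAt_rpow_const ρ p (Or.inl (ne_of_gt hρ))
  have h3C : ∀ ρ : ℝ, ρ ∈ Ioi (0:ℝ) → ContinuousAt (h3f m) ρ :=
    fun ρ hρ => (aux_h3deriv m hρ).continuousAt
  have h1C : ∀ ρ : ℝ, ρ ∈ Ioi (0:ℝ) → ContinuousAt (h1f m) ρ :=
    fun ρ hρ => aux_h1cont m hρ
  have hIoi : uIcc a' A' ⊆ Ioi (0:ℝ) := by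
    rw [uIcc_of_le haA]
    intro x hx
    exact lt_of_lt_of_le ha' hx.1
  have hf1c : ContinuousOn f1 (uIcc a' A') := by
    intro ρ hρ
    have hρ' := hIoi hρ
    apply ContinuousAt.continuousWithinAt
    have hL : ContinuousAt (fun ρ => L0op m z (deriv z) ρ) ρ := by
      unfold L0op
      apply hdzc.continuousAt.add
      apply ContinuousAt.mul
      · exact Complex.continuous_ofReal.continuousAt.comp
          ((continuousAt_const.div continuousAt_id
            (show (id ρ : ℝ) ≠ 0 from (Set.mem_Ioi.mp hρ').ne')).mul (h3C ρ hρ'))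
      · exact hzc.continuousAt
    exact ((hL.norm.pow 2).mul (hrpC _ ρ hρ')).mul continuousAt_id
  have hf2c : ContinuousOn f2 (uIcc a' A') := by
    intro ρ hρ
    have hρ' := hIoi hρ
    exact (((hdzc.continuousAt.norm.pow 2).mul (hrpC _ ρ hρ')).mul
      continuousAt_id).continuousWithinAt
  have hf3c : ContinuousOn f3 (uIcc a' A') := by
    intro ρ hρ
    have hρ' := hIoi hρ
    apply ContinuousAt.continuousWithinAt
    have h2b2 : (0:ℝ) < ρ ^ (2*b+2) := Real.rpow_pos_of_pos hρ' _
    exact (((hzc.continuousAt.norm.pow 2).div (hrpC _ ρ hρ') h2b2.ne').mul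
      (((continuousAt_const.mul (h3C ρ hρ')).const_add _).sub
        (continuousAt_const.mul ((h1C ρ hρ').pow 2)))).mul continuousAt_id
  have hFc : ContinuousOn (fun ρ => f1 ρ - f2 ρ - (m:ℝ) * f3 ρ) (uIcc a' A') :=
    (hf1c.sub hf2c).sub (continuousOn_const.mul hf3c)
  -- the antiderivative
  set D : ℝ → ℝ := fun ρ => (m:ℝ) * (h3f m ρ * ρ ^ (-(2 * b)) * ‖z ρ‖^2) with hDdef
  have hDz : ∀ ρ, ρ ∈ uIcc a' A' →
      HasDerivAt D (f1 ρ - f2 ρ - (m:ℝ) * f3 ρ) ρ := by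
    intro ρ hρ
    have hρ' : (0:ℝ) < ρ := hIoi hρ
    have hne : ρ ≠ 0 := hρ'.ne'
    have hd3 := aux_h3deriv m hρ'
    have hdr : HasDerivAt (fun x : ℝ => x ^ (-(2*b))) ((-(2*b)) * ρ ^ (-(2*b)-1)) ρ :=
      Real.hasDerivAt_rpow_const (Or.inl hne)
    have hg : HasDerivAt (fun ρ => ‖z ρ‖^2) (2 * (inner ℝ (z ρ) (deriv z ρ) : ℝ)) ρ :=
      (hzd ρ).norm_sq
    have hD := (((hd3.mul hdr).mul hg).const_mul (m:ℝ))
    have hD' : HasDerivAt D ((m:ℝ) * ((m / ρ * h1f m ρ ^ 2 * ρ ^ (-(2*b))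
        + h3f m ρ * (-(2*b) * ρ ^ (-(2*b)-1))) * ‖z ρ‖^2
        + h3f m ρ * ρ ^ (-(2*b)) * (2 * inner ℝ (z ρ) (deriv z ρ)))) ρ := hD
    convert hD' using 1
    -- algebraic identity
    set T : ℝ := ρ ^ (-(2*b)) with hTdef
    have hT : 0 < T := Real.rpow_pos_of_pos hρ' _
    have e1 : ρ ^ (2*b+2) = ρ^2 / T := by
      rw [hTdef, Real.rpow_neg hρ'.le, div_inv_eq_mul, Real.rpow_add hρ', Real.rpow_two]
      ring
    have e2 : ρ ^ (-(2*b)-1) = T / ρ := by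
      rw [hTdef, Real.rpow_sub hρ', Real.rpow_one]
    have hexp : ‖L0op m z (deriv z) ρ‖^2 = ‖deriv z ρ‖^2
        + 2*(((m:ℝ)/ρ) * h3f m ρ)*(inner ℝ (z ρ) (deriv z ρ) : ℝ)
        + (((m:ℝ)/ρ) * h3f m ρ)^2 * ‖z ρ‖^2 := by
      unfold L0op
      exact aux_normsq_expand _ _ _
    have hhh := aux_h1h3 m hρ'
    simp only [hf1def, hf2def, hf3def, hexp, e1, e2, ← hTdef]
    set g : ℝ := ‖z ρ‖^2
    set P : ℝ := (inner ℝ (z ρ) (deriv z ρ) : ℝ)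
    set h1v : ℝ := h1f m ρ
    set h3v : ℝ := h3f m ρ
    field_simp
    linear_combination ((m:ℝ)^2 * g) * hhh
  -- integrate
  have hFi : IntervalIntegrable (fun ρ => f1 ρ - f2 ρ - (m:ℝ) * f3 ρ) volume a' A' :=
    hFc.intervalIntegrable
  have hFTC := intervalIntegral.integral_eq_sub_of_hasDerivAt hDz hFi
  have hDa : D a' = 0 := by simp [hDdef, hz0 a' ha'K]
  have hDA : D A' = 0 := by simp [hDdef, hz0 A' hA'K]
  rw [hDa, hDA, sub_zero] at hFTC
  have hsplit : (∫ ρ in a'..A', (f1 ρ - f2 ρ - (m:ℝ) * f3 ρ))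
      = (∫ ρ in a'..A', f1 ρ) - (∫ ρ in a'..A', f2 ρ) - (m:ℝ) * ∫ ρ in a'..A', f3 ρ := by
    have i1 : IntervalIntegrable f1 volume a' A' := hf1c.intervalIntegrable
    have i2 : IntervalIntegrable f2 volume a' A' := hf2c.intervalIntegrable
    have i3 : IntervalIntegrable f3 volume a' A' := hf3c.intervalIntegrable
    rw [intervalIntegral.integral_sub (i1.sub i2) (i3.const_mul _),
      intervalIntegral.integral_sub i1 i2, intervalIntegral.integral_const_mul]
  rw [hsplit] at hFTC
  have r1 := hred f1 hf1z
  have r2 := hred f2 hf2z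
  have r3 := hred f3 hf3z
  show (∫ ρ in Ioi (0:ℝ), f1 ρ) = (∫ ρ in Ioi (0:ℝ), f2 ρ) + (m:ℝ) * ∫ ρ in Ioi (0:ℝ), f3 ρ
  rw [r1, r2, r3]
  linarith


end
end
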